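/- arXiv:2205.09090 — 8 statements merged into one kernel-verified Lean document; each statement's English description precedes it below -/
import Mathlib

section
/- For every n ≥ 1, 1 ≤ i ≤ n−1 and 0 ≤ j ≤ min(i−1, n−1−i), the special involution σ_{i,j} of S_n (the permutation of {1,…,n} that swaps k and k+j+1 for every k with i−j ≤ k ≤ i and fixes all other points) equals the product of adjacent transpositions s_i (s_{i−1} s_{i+1}) (s_{i−2} s_i s_{i+2}) ⋯ (s_{i−j} s_{i−j+2} ⋯ s_{i+j}) ⋯ (s_{i−2} s_i s_{i+2}) (s_{i−1} s_{i+1}) s_i, where s_k denotes the transposition of k and k+1; that is, σ_{i,j} = (∏_{t=0}^{j} B_t) · (∏_{t=0}^{j−1} B_{j−1−t}), where B_t = ∏_{m=0}^{t} s_{i−t+2m} (the factors within each block B_t commuting). -/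
/-
Every block `B_t` is a product of disjoint adjacent transpositions, hence an involution, so the
second half of the word is the inverse of `A = B_0 B_1 ⋯ B_{j-1}` and the word is the conjugate
`A B_j A⁻¹`. The prefix `A` shuffles the interval `[i+1-j, i+j]`, listing it as
`i+1, i+1-j, i+2, i+2-j, …`; it carries the `m`-th transposition `(i-j+2m, i-j+2m+1)` of `B_j`
to `(i-j+m, i+1+m)`, the `m`-th transposition of `σ_{i,j}`.
-/

/-- The action of the special involution `σ_{i,j}` of `S_n` on `{1,…,n}`:
it swaps `k` and `k+j+1` for every `k` with `i-j ≤ k ≤ i` and fixes all other points. -/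
def sigmaFun (i j k : ℕ) : ℕ :=
  if i - j ≤ k ∧ k ≤ i then k + j + 1
  else if i + 1 ≤ k ∧ k ≤ i + j + 1 then k - (j + 1)
  else k

/-- The adjacent transposition `s_k = (k, k+1)`. -/
def adjT (k : ℕ) : Equiv.Perm ℕ := Equiv.swap k (k + 1)

/-- The block `B_t = ∏_{m=0}^{t} s_{i-t+2m}` (the factors pairwise commute). -/
def block (i t : ℕ) : Equiv.Perm ℕ :=
  ((List.range (t + 1)).map (fun m => adjT (i - t + 2 * m))).prod

/-- The word `s_i (s_{i-1} s_{i+1}) ⋯ (s_{i-j} s_{i-j+2} ⋯ s_{i+j}) ⋯ (s_{i-1} s_{i+1}) s_i`,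
i.e. `(∏_{t=0}^{j} B_t) · (∏_{t=0}^{j-1} B_{j-1-t})`. -/
def sigmaWord (i j : ℕ) : Equiv.Perm ℕ :=
  ((List.range (j + 1)).map (fun t => block i t)).prod *
    ((List.range j).map (fun t => block i (j - 1 - t))).prod


theorem List.reverse_map_range {α : Type*} (f : ℕ → α) (n : ℕ) :
    ((List.range n).map f).reverse = (List.range n).map fun t => f (n - 1 - t) := by
  rw [← List.map_reverse, List.range_eq_range', List.reverse_range', List.map_map,
    ← List.range_eq_range']
  simp only [zero_add, Function.comp_def]

theorem List.prod_reverse_of_forall_inv_eq {G : Type*} [Group G] {L : List G}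
    (h : ∀ x ∈ L, x⁻¹ = x) : L.reverse.prod = L.prod⁻¹ := by
  rw [List.prod_inv_reverse, List.map_congr_left h, List.map_id']

lemma block_succ {i t : ℕ} (ht : t + 1 ≤ i) :
    block i (t + 1) = adjT (i - (t + 1)) * block (i + 1) t := by
  have hshift : (fun m => adjT (i - (t + 1) + 2 * m)) ∘ Nat.succ =
      fun m => adjT (i + 1 - t + 2 * m) := by
    funext m
    simp only [Function.comp_apply]
    congr 1
    omega
  rw [block, List.range_succ_eq_map, List.map_cons, List.map_map, hshift, List.prod_cons,
    mul_zero, add_zero, block]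

lemma block_apply {i t : ℕ} (ht : t ≤ i) (k : ℕ) :
    block i t k =
      if i - t ≤ k ∧ k ≤ i + t + 1 then
        if (k - (i - t)) % 2 = 0 then k + 1 else k - 1
      else k := by
  induction t generalizing i k with
  | zero =>
    simp only [block, zero_add, List.range_one, List.map_singleton, List.prod_singleton,
      adjT, Equiv.swap_apply_def]
    split_ifs <;> omega
  | succ t ih =>
    rw [block_succ ht, Equiv.Perm.mul_apply, ih (by omega), adjT]
    simp only [Equiv.swap_apply_def]
    split_ifs <;> omega

lemma block_inv {i t : ℕ} (ht : t ≤ i) : (block i t)⁻¹ = block i t := by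
  refine inv_eq_of_mul_eq_one_right (Equiv.ext fun k => ?_)
  rw [Equiv.Perm.mul_apply, Equiv.Perm.one_apply, block_apply ht, block_apply ht]
  split_ifs <;> omega

def blockPrefix (i j : ℕ) : Equiv.Perm ℕ := ((List.range j).map (block i)).prod

lemma blockPrefix_succ (i j : ℕ) : blockPrefix i (j + 1) = blockPrefix i j * block i j := by
  rw [blockPrefix, blockPrefix, List.range_succ, List.map_append, List.prod_append,
    List.map_singleton, List.prod_singleton]

lemma blockPrefix_apply {i j : ℕ} (hj : j ≤ i) (k : ℕ) :
    blockPrefix i j k =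
      if i + 1 - j ≤ k ∧ k ≤ i + j then
        if (k - (i + 1 - j)) % 2 = 0 then i + 1 + (k - (i + 1 - j)) / 2
        else i + 1 - j + (k - (i + 1 - j)) / 2
      else k := by
  induction j generalizing k with
  | zero =>
    simp only [blockPrefix, List.range_zero, List.map_nil, List.prod_nil, Equiv.Perm.one_apply]
    split_ifs <;> omega
  | succ j ih =>
    rw [blockPrefix_succ, Equiv.Perm.mul_apply, block_apply (by omega), ih (by omega)]
    split_ifs <;> omega

lemma prod_map_block_sub_eq_inv {i j : ℕ} (hj : j ≤ i) :
    ((List.range j).map fun t => block i (j - 1 - t)).prod = (blockPrefix i j)⁻¹ := by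
  have hinv : ∀ x ∈ (List.range j).map (block i), x⁻¹ = x := by
    simp only [List.mem_map, List.mem_range]
    rintro _ ⟨t, ht, rfl⟩
    exact block_inv (by omega)
  rw [← List.reverse_map_range, List.prod_reverse_of_forall_inv_eq hinv, blockPrefix]

lemma sigmaWord_mul_blockPrefix {i j : ℕ} (hj : j ≤ i) :
    sigmaWord i j * blockPrefix i j = blockPrefix i j * block i j := by
  rw [sigmaWord, prod_map_block_sub_eq_inv hj, inv_mul_cancel_right]
  exact blockPrefix_succ i j

lemma blockPrefix_block_apply {i j : ℕ} (hj : j ≤ i) (k : ℕ) :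
    blockPrefix i j (block i j k) = sigmaFun i j (blockPrefix i j k) := by
  rw [blockPrefix_apply hj, blockPrefix_apply hj, block_apply hj, sigmaFun]
  split_ifs <;> omega

theorem special_involution_eq_word_general (n i j : ℕ)
    (hj : j ≤ min (i - 1) (n - 1 - i)) :
    ∀ k : ℕ, sigmaWord i j k = sigmaFun i j k := by
  have hji : j ≤ i := by omega
  intro k
  obtain ⟨m, rfl⟩ := (blockPrefix i j).surjective k
  rw [← Equiv.Perm.mul_apply, sigmaWord_mul_blockPrefix hji, Equiv.Perm.mul_apply,
    blockPrefix_block_apply hji]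

/-- The special involution `σ_{i,j}` equals the product of adjacent transpositions
`s_i (s_{i-1} s_{i+1}) (s_{i-2} s_i s_{i+2}) ⋯ (s_{i-j} s_{i-j+2} ⋯ s_{i+j}) ⋯
(s_{i-2} s_i s_{i+2}) (s_{i-1} s_{i+1}) s_i`. -/
theorem special_involution_eq_word (n i j : ℕ) (hn : 1 ≤ n)
    (hi1 : 1 ≤ i) (hi2 : i ≤ n - 1) (hj : j ≤ min (i - 1) (n - 1 - i)) :
    ∀ k : ℕ, sigmaWord i j k = sigmaFun i j k :=
  special_involution_eq_word_general n i j hj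
end

section
/- Every product of pairwise distant special involutions in S_n is a 321-avoiding involution: if d = σ_{i_1,j_1} σ_{i_2,j_2} ⋯ σ_{i_r,j_r} is a product of special involutions whose extended supports pairwise intersect in at most one element, then d is an involution (d² = identity) and d is 321-avoiding, i.e., there are no indices p < q < r with d(p) > d(q) > d(r). -/
/-- The special involution `σ_{i,j}` of `S_n`: the permutation of `{1,…,n}` that swaps
`k` and `k+j+1` for every `k` with `i-j ≤ k ≤ i` (these transpositions are pairwise
disjoint, hence commute) and fixes all other points. -/
def sigmaPerm (i j : ℕ) : Equiv.Perm ℕ :=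
  ((List.range (j + 1)).map (fun t => Equiv.swap (i - j + t) (i + t + 1))).prod

/-- The parameter constraints `1 ≤ i ≤ n-1` and `0 ≤ j ≤ min(i-1, n-1-i)` for a special
involution `σ_{i,j}` of `S_n`. -/
def SpecialParams (n i j : ℕ) : Prop :=
  1 ≤ i ∧ i ≤ n - 1 ∧ j ≤ min (i - 1) (n - 1 - i)

/-- The extended support `{i-j-1, i-j, …, i+j+2}` of `σ_{i,j}`. -/
def extSupport (i j : ℕ) : Finset ℕ := Finset.Icc (i - j - 1) (i + j + 2)

/-- Two special involutions (given by their parameters) are distant if their extended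
supports have at most one common element. -/
def Distant (p q : ℕ × ℕ) : Prop :=
  (extSupport p.1 p.2 ∩ extSupport q.1 q.2).card ≤ 1

/-- `w ∈ S_n` is 321-avoiding: there are no indices `1 ≤ p < q < r ≤ n` with
`w(p) > w(q) > w(r)`. -/
def Avoids321 (n : ℕ) (w : Equiv.Perm ℕ) : Prop :=
  ∀ p q r : ℕ, 1 ≤ p → p < q → q < r → r ≤ n → ¬ (w q < w p ∧ w r < w q)

/-! The support `[i-j, i+j+1]` of `σ_{i,j}` is its extended support without the two end
points, so the supports of distant special involutions are separated by a gap. Hence the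
product acts on each support as the corresponding factor and fixes all other points, which
makes it an involution. On its support `σ_{i,j}` translates the halves `[i-j, i]` and
`[i+1, i+j+1]` rigidly past each other, so every inversion `x < y` of the product lies in the
support of a single factor with `x ≤ i < y`. A pattern `321` at `a < b < c` would give factors
`σ_{i,j}`, `σ_{i',j'}` whose supports both contain `b` while `i < b ≤ i'`: two distinct factors
with overlapping supports. -/

lemma prod_map_swap_add_apply (a b m x : ℕ) (h : a + m ≤ b) :
    ((List.range m).map fun t => Equiv.swap (a + t) (b + t)).prod x =
      if a ≤ x ∧ x < a + m then x + (b - a)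
      else if b ≤ x ∧ x < b + m then x - (b - a)
      else x := by
  induction m generalizing x with
  | zero =>
    simp only [List.range_zero, List.map_nil, List.prod_nil, Equiv.Perm.one_apply]
    split_ifs <;> omega
  | succ m ih =>
    simp only [List.range_succ, List.map_append, List.prod_append, List.map_singleton,
      List.prod_singleton, Equiv.Perm.mul_apply, Equiv.swap_apply_def]
    split_ifs <;> rw [ih _ (by omega)] <;> split_ifs <;> omega

def sigmaSupport (i j : ℕ) : Set ℕ := Set.Icc (i - j) (i + j + 1)

lemma mem_sigmaSupport {i j x : ℕ} : x ∈ sigmaSupport i j ↔ i - j ≤ x ∧ x ≤ i + j + 1 :=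
  Set.mem_Icc

section sigmaPerm

variable {i j : ℕ}

lemma sigmaPerm_apply (hji : j ≤ i) (x : ℕ) :
    sigmaPerm i j x =
      if i - j ≤ x ∧ x ≤ i then x + (j + 1)
      else if i < x ∧ x ≤ i + j + 1 then x - (j + 1)
      else x := by
  have hswaps : sigmaPerm i j =
      ((List.range (j + 1)).map fun t => Equiv.swap (i - j + t) (i + 1 + t)).prod := by
    simp only [sigmaPerm, add_right_comm i _ 1]
  rw [hswaps, prod_map_swap_add_apply _ _ _ _ (by omega)]
  split_ifs <;> omega

lemma sigmaPerm_apply_of_notMem (hji : j ≤ i) {x : ℕ} (hx : x ∉ sigmaSupport i j) :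
    sigmaPerm i j x = x := by
  rw [mem_sigmaSupport] at hx
  rw [sigmaPerm_apply hji]
  split_ifs <;> omega

lemma sigmaPerm_mem_sigmaSupport (hji : j ≤ i) {x : ℕ} (hx : x ∈ sigmaSupport i j) :
    sigmaPerm i j x ∈ sigmaSupport i j := by
  rw [mem_sigmaSupport] at hx ⊢
  rw [sigmaPerm_apply hji]
  split_ifs <;> omega

lemma sigmaPerm_involutive (hji : j ≤ i) : Function.Involutive (sigmaPerm i j) := by
  intro x
  simp only [sigmaPerm_apply hji]
  split_ifs <;> omega

lemma le_lt_of_sigmaPerm_inversion (hji : j ≤ i) {x y : ℕ} (hxy : x < y)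
    (hinv : sigmaPerm i j y < sigmaPerm i j x) : x ≤ i ∧ i < y := by
  rw [sigmaPerm_apply hji, sigmaPerm_apply hji] at hinv
  split_ifs at hinv <;> omega

end sigmaPerm

lemma Distant.separated {p q : ℕ × ℕ} (hpq : Distant p q) :
    p.1 + p.2 + 1 < q.1 - q.2 ∨ q.1 + q.2 + 1 < p.1 - p.2 := by
  by_contra! hmeet
  set m := max (p.1 - p.2 - 1) (q.1 - q.2 - 1)
  have hsub : ({m, m + 1} : Finset ℕ) ⊆ extSupport p.1 p.2 ∩ extSupport q.1 q.2 := by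
    intro y hy
    simp only [Finset.mem_insert, Finset.mem_singleton] at hy
    simp only [extSupport, Finset.mem_inter, Finset.mem_Icc]
    omega
  have hcard := Finset.card_le_card hsub
  rw [Finset.card_pair (by omega)] at hcard
  rw [Distant] at hpq
  omega

instance : Std.Symm Distant where
  symm p q h := by rwa [Distant, Finset.inter_comm]

def sigmaProd (L : List (ℕ × ℕ)) : Equiv.Perm ℕ := (L.map fun p => sigmaPerm p.1 p.2).prod

section sigmaProd

variable {L : List (ℕ × ℕ)}

lemma sigmaProd_apply_of_forall_notMem (hj : ∀ p ∈ L, p.2 ≤ p.1) {x : ℕ}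
    (hx : ∀ p ∈ L, x ∉ sigmaSupport p.1 p.2) : sigmaProd L x = x := by
  induction L with
  | nil => rfl
  | cons q L ih =>
    simp only [List.forall_mem_cons] at hj hx
    simp only [sigmaProd, List.map_cons, List.prod_cons, Equiv.Perm.mul_apply] at ih ⊢
    rw [ih hj.2 hx.2, sigmaPerm_apply_of_notMem hj.1 hx.1]

lemma sigmaProd_apply_of_mem (hj : ∀ p ∈ L, p.2 ≤ p.1) (hL : L.Pairwise Distant)
    {p : ℕ × ℕ} (hp : p ∈ L) {x : ℕ} (hx : x ∈ sigmaSupport p.1 p.2) :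
    sigmaProd L x = sigmaPerm p.1 p.2 x := by
  induction L with
  | nil => cases hp
  | cons q L ih =>
    simp only [List.forall_mem_cons] at hj
    obtain ⟨hq, hL⟩ := List.pairwise_cons.mp hL
    simp only [sigmaProd, List.map_cons, List.prod_cons, Equiv.Perm.mul_apply] at ih ⊢
    rcases List.mem_cons.mp hp with rfl | hp
    · refine congrArg _ (sigmaProd_apply_of_forall_notMem hj.2 fun r hr => ?_)
      have := (hq r hr).separated
      rw [mem_sigmaSupport] at hx ⊢
      omega
    · rw [ih hj.2 hL hp]
      apply sigmaPerm_apply_of_notMem hj.1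
      have hσx := sigmaPerm_mem_sigmaSupport (hj.2 p hp) hx
      have := (hq p hp).separated
      rw [mem_sigmaSupport] at hσx ⊢
      omega

lemma sigmaProd_apply_cases (hj : ∀ p ∈ L, p.2 ≤ p.1) (hL : L.Pairwise Distant) (x : ℕ) :
    (∃ p ∈ L, x ∈ sigmaSupport p.1 p.2 ∧ sigmaProd L x = sigmaPerm p.1 p.2 x) ∨
      ((∀ p ∈ L, x ∉ sigmaSupport p.1 p.2) ∧ sigmaProd L x = x) := by
  by_cases hx : ∃ p ∈ L, x ∈ sigmaSupport p.1 p.2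
  · obtain ⟨p, hp, hxp⟩ := hx
    exact Or.inl ⟨p, hp, hxp, sigmaProd_apply_of_mem hj hL hp hxp⟩
  · push Not at hx
    exact Or.inr ⟨hx, sigmaProd_apply_of_forall_notMem hj hx⟩

lemma sigmaProd_mul_self (hj : ∀ p ∈ L, p.2 ≤ p.1) (hL : L.Pairwise Distant) :
    sigmaProd L * sigmaProd L = 1 := by
  ext x
  rw [Equiv.Perm.mul_apply, Equiv.Perm.one_apply]
  rcases sigmaProd_apply_cases hj hL x with ⟨p, hp, hxp, hfx⟩ | ⟨_, hfx⟩
  · rw [hfx, sigmaProd_apply_of_mem hj hL hp (sigmaPerm_mem_sigmaSupport (hj p hp) hxp),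
      sigmaPerm_involutive (hj p hp)]
  · rw [hfx, hfx]

lemma exists_mem_of_sigmaProd_inversion (hj : ∀ p ∈ L, p.2 ≤ p.1) (hL : L.Pairwise Distant)
    {x y : ℕ} (hxy : x < y) (hinv : sigmaProd L y < sigmaProd L x) :
    ∃ p ∈ L, x ∈ sigmaSupport p.1 p.2 ∧ y ∈ sigmaSupport p.1 p.2 ∧
      x ≤ p.1 ∧ p.1 < y := by
  rcases sigmaProd_apply_cases hj hL x with ⟨p, hp, hxp, hfx⟩ | ⟨hx, hfx⟩ <;>
    rcases sigmaProd_apply_cases hj hL y with ⟨q, hq, hyq, hfy⟩ | ⟨hy, hfy⟩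
  · by_cases hpq : p = q
    · subst hpq
      rw [hfx, hfy] at hinv
      exact ⟨p, hp, hxp, hyq, le_lt_of_sigmaPerm_inversion (hj p hp) hxy hinv⟩
    · have hσx := sigmaPerm_mem_sigmaSupport (hj p hp) hxp
      have hσy := sigmaPerm_mem_sigmaSupport (hj q hq) hyq
      have := (hL.forall hp hq hpq).separated
      rw [mem_sigmaSupport] at hxp hyq hσx hσy
      omega
  · have hσx := sigmaPerm_mem_sigmaSupport (hj p hp) hxp
    have := hy p hp
    rw [mem_sigmaSupport] at hxp hσx this
    omega
  · have hσy := sigmaPerm_mem_sigmaSupport (hj q hq) hyq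
    have := hx q hq
    rw [mem_sigmaSupport] at hyq hσy this
    omega
  · omega

lemma sigmaProd_avoids321 (hj : ∀ p ∈ L, p.2 ≤ p.1) (hL : L.Pairwise Distant) (n : ℕ) :
    Avoids321 n (sigmaProd L) := by
  rintro a b c - hab hbc - ⟨hba, hcb⟩
  obtain ⟨p, hp, -, hbp, -, hpb⟩ := exists_mem_of_sigmaProd_inversion hj hL hab hba
  obtain ⟨q, hq, hbq, -, hbq', -⟩ := exists_mem_of_sigmaProd_inversion hj hL hbc hcb
  have hpq : p ≠ q := by rintro rfl; omega
  have := (hL.forall hp hq hpq).separated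
  rw [mem_sigmaSupport] at hbp hbq
  omega

end sigmaProd

/-- Every product of pairwise distant special involutions in `S_n` is a 321-avoiding
involution. -/
theorem product_of_distant_specials_is_321_avoiding_involution
    (n : ℕ) (L : List (ℕ × ℕ))
    (hspec : ∀ p ∈ L, SpecialParams n p.1 p.2)
    (hdist : L.Pairwise Distant) :
    (L.map (fun p => sigmaPerm p.1 p.2)).prod * (L.map (fun p => sigmaPerm p.1 p.2)).prod = 1 ∧
      Avoids321 n (L.map (fun p => sigmaPerm p.1 p.2)).prod := by
  have hj : ∀ p ∈ L, p.2 ≤ p.1 := fun p hp => by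
    obtain ⟨-, -, hp⟩ := hspec p hp
    omega
  exact ⟨sigmaProd_mul_self hj hdist, sigmaProd_avoids321 hj hdist n⟩
end

section
/- For every n ≥ 1 and every a with 0 ≤ a ≤ ⌊n/2⌋, the number of Kostant involutions in S_n whose cycle decomposition contains exactly a transpositions equals the binomial coefficient C(n−a, a). -/
/-- A Kostant involution in `S_n`: a product of pairwise distant special involutions
(the identity being the empty product). -/
def IsKostant (n : ℕ) (w : Equiv.Perm ℕ) : Prop :=
  ∃ L : List (ℕ × ℕ),
    (∀ p ∈ L, SpecialParams n p.1 p.2) ∧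
    L.Pairwise Distant ∧
    w = (L.map (fun p => sigmaPerm p.1 p.2)).prod

/-- `ki n a` is the number of Kostant involutions in `S_n` whose cycle decomposition
contains exactly `a` transpositions, i.e. with exactly `2a` non-fixed points. -/
noncomputable def ki (n a : ℕ) : ℕ :=
  Set.ncard {w : Equiv.Perm ℕ | IsKostant n w ∧ Set.ncard {k : ℕ | w k ≠ k} = 2 * a}


/-!
Each special involution `σ_{i,j}` exchanges the two halves of the interval `[i-j, i+j+2)`, and
two of them are distant exactly when these intervals are separated by at least one point. So a
Kostant involution of `S_n` with `a` transpositions is a family of even-length blocks in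
`[1, n]`, pairwise separated, of total length `2a`. Read from left to right, such a family is a
word of runs "`g` fixed points, a block of length `2c`, one separating point". Halving every
block turns it into the decomposition into maximal runs of an `a`-element subset of
`[1, n - a]`, and every such subset has exactly one decomposition; hence `C(n - a, a)`.
-/

open Equiv Finset

namespace Kostant

theorem prod_apply_ne_self_iff_of_pairwise_disjoint {α : Type*} {l : List (Perm α)}
    (hl : l.Pairwise Perm.Disjoint) {x : α} : l.prod x ≠ x ↔ ∃ f ∈ l, f x ≠ x := by
  induction l with
  | nil => simp
  | cons f l ih =>
    obtain ⟨hf, hl⟩ := List.pairwise_cons.1 hl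
    rw [List.prod_cons, ne_eq, (Perm.disjoint_prod_right l hf).mul_apply_eq_iff, not_and_or,
      ← ne_eq, ← ne_eq, ih hl, List.exists_mem_cons_iff]

/-- Exchanges the two halves of the interval `[m, m + 2c)`. -/
def blockPerm (m c : ℕ) : Perm ℕ :=
  ((List.range c).map fun t => swap (m + t) (m + t + c)).prod

theorem blockPerm_apply_ne_self_iff {m c x : ℕ} :
    blockPerm m c x ≠ x ↔ m ≤ x ∧ x < m + 2 * c := by
  have hdisj : ((List.range c).map fun t => swap (m + t) (m + t + c)).Pairwise Perm.Disjoint := by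
    refine List.pairwise_map.2 (List.pairwise_lt_range.imp_of_mem fun _ hu htu y => ?_)
    rw [List.mem_range] at hu
    rw [or_iff_not_and_not, ← ne_eq, ← ne_eq, swap_apply_ne_self_iff, swap_apply_ne_self_iff]
    omega
  rw [blockPerm, prod_apply_ne_self_iff_of_pairwise_disjoint hdisj]
  simp only [List.mem_map, List.mem_range, exists_exists_and_eq_and, swap_apply_ne_self_iff]
  constructor
  · rintro ⟨t, ht, -, h⟩
    omega
  · intro h
    refine ⟨if x < m + c then x - m else x - m - c, ?_, ?_, ?_⟩ <;> split_ifs <;> omega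

theorem blockPerm_disjoint {m c m' c' : ℕ} (h : m + 2 * c ≤ m') :
    (blockPerm m c).Disjoint (blockPerm m' c') := fun x => by
  rw [or_iff_not_and_not, ← ne_eq, ← ne_eq, blockPerm_apply_ne_self_iff,
    blockPerm_apply_ne_self_iff]
  omega

theorem sigmaPerm_eq_blockPerm {i j : ℕ} (h : j ≤ i) :
    sigmaPerm i j = blockPerm (i - j) (j + 1) := by
  refine congrArg List.prod (List.map_congr_left fun t _ => ?_)
  rw [show i + t + 1 = i - j + t + (j + 1) by omega]

theorem distant_iff {i j i' j' : ℕ} (hj : j < i) (hj' : j' < i') :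
    Distant (i, j) (i', j') ↔ i + j + 2 < i' - j' ∨ i' + j' + 2 < i - j := by
  have hinter : extSupport i j ∩ extSupport i' j' =
      Icc (max (i - j - 1) (i' - j' - 1)) (min (i + j + 2) (i' + j' + 2)) := by
    ext x
    simp only [extSupport, mem_inter, mem_Icc]
    omega
  rw [Distant, hinter, Nat.card_Icc]
  omega

/-- The block `[p.1, p.1 + k * p.2)` ends at least one point before `q.1`. -/
def Separated (k : ℕ) (p q : ℕ × ℕ) : Prop := p.1 + k * p.2 + 1 ≤ q.1

theorem exists_perm_pairwise_separated {k : ℕ} {B : List (ℕ × ℕ)}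
    (hB : B.Pairwise fun p q => Separated k p q ∨ Separated k q p) :
    ∃ B' : List (ℕ × ℕ), B'.Perm B ∧ B'.Pairwise (Separated k) := by
  have hperm := List.mergeSort_perm B fun p q => p.1 ≤ q.1
  have hsorted : (B.mergeSort fun p q => p.1 ≤ q.1).Pairwise fun p q => p.1 ≤ q.1 := by
    simpa using List.pairwise_mergeSort (le := fun p q : ℕ × ℕ => p.1 ≤ q.1)
      (by simp only [decide_eq_true_eq]; omega)
      (by simp only [Bool.or_eq_true, decide_eq_true_eq]; omega) B
  refine ⟨_, hperm, (hsorted.and ((hperm.pairwise_iff Or.symm).2 hB)).imp ?_⟩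
  rintro p q ⟨hle, h⟩
  exact h.resolve_right fun h' => by unfold Separated at h'; omega

/-! A list `R` of pairs `(g, c)` is read from the point `s` on: skip `g` points, lay down a
block of length `k * c`, skip one more point, and continue with the rest of `R`. `layout`
lists the blocks as pairs `(start, c)` and `cover` is their union. With `k = 2` the lists
encode Kostant involutions, with `k = 1` finite sets. -/

def layout (k : ℕ) : ℕ → List (ℕ × ℕ) → List (ℕ × ℕ)
  | _, [] => []
  | s, (g, c) :: R => (s + g, c) :: layout k (s + g + k * c + 1) R

def cover (k : ℕ) : ℕ → List (ℕ × ℕ) → Finset ℕ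
  | _, [] => ∅
  | s, (g, c) :: R => Ico (s + g) (s + g + k * c) ∪ cover k (s + g + k * c + 1) R

section Layout

variable {k s : ℕ} {R : List (ℕ × ℕ)}

theorem forall_mem_layout_snd {P : ℕ → Prop} :
    (∀ p ∈ layout k s R, P p.2) ↔ ∀ p ∈ R, P p.2 := by
  induction R generalizing s with
  | nil => simp [layout]
  | cons p R ih => rw [layout, List.forall_mem_cons, ih, List.forall_mem_cons]

theorem le_fst_of_mem_layout {p : ℕ × ℕ} (hp : p ∈ layout k s R) : s ≤ p.1 := by
  induction R generalizing s with
  | nil => simp [layout] at hp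
  | cons q R ih =>
    rcases List.mem_cons.1 hp with rfl | hp
    · exact Nat.le_add_right _ _
    · exact (ih hp).trans' (by omega)

theorem pairwise_separated_layout : (layout k s R).Pairwise (Separated k) := by
  induction R generalizing s with
  | nil => exact List.Pairwise.nil
  | cons q R ih => exact List.Pairwise.cons (fun p hp => le_fst_of_mem_layout hp) ih

theorem exists_layout_eq {B : List (ℕ × ℕ)} (hB : B.Pairwise (Separated k))
    (hs : ∀ p ∈ B, s ≤ p.1) : ∃ R, layout k s R = B := by
  induction B generalizing s with
  | nil => exact ⟨[], rfl⟩
  | cons p B ih =>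
    obtain ⟨hp, hB⟩ := List.pairwise_cons.1 hB
    obtain ⟨R, hR⟩ := ih hB hp
    refine ⟨(p.1 - s, p.2) :: R, ?_⟩
    rw [layout, show s + (p.1 - s) = p.1 by have := hs p List.mem_cons_self; omega, hR]

theorem mem_cover {x : ℕ} :
    x ∈ cover k s R ↔ ∃ p ∈ layout k s R, p.1 ≤ x ∧ x < p.1 + k * p.2 := by
  induction R generalizing s with
  | nil => simp [cover, layout]
  | cons q R ih => simp [cover, layout, ih]

theorem le_of_mem_cover {x : ℕ} (hx : x ∈ cover k s R) : s ≤ x := by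
  obtain ⟨p, hp, hpx, -⟩ := mem_cover.1 hx
  exact (le_fst_of_mem_layout hp).trans hpx

theorem disjoint_Ico_cover {g c : ℕ} :
    Disjoint (Ico (s + g) (s + g + k * c)) (cover k (s + g + k * c + 1) R) :=
  disjoint_left.2 fun x hx hx' => by
    have := le_of_mem_cover hx'
    rw [mem_Ico] at hx
    omega

theorem card_cover : (cover k s R).card = k * (R.map Prod.snd).sum := by
  induction R generalizing s with
  | nil => rfl
  | cons q R ih =>
    rw [cover, card_union_of_disjoint disjoint_Ico_cover, Nat.card_Ico, ih]
    simp [mul_add]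

theorem cover_subset_Iio_iff {N : ℕ} (hk : 1 ≤ k) (hR : ∀ p ∈ R, 1 ≤ p.2) :
    cover k s R ⊆ Iio N ↔
      (R ≠ [] → s + (R.map Prod.fst).sum + k * (R.map Prod.snd).sum + R.length ≤ N + 1) := by
  induction R generalizing s with
  | nil => simp [cover]
  | cons q R ih =>
    have hc : 1 ≤ k * q.2 := Nat.mul_le_mul hk (hR q List.mem_cons_self)
    rw [cover, union_subset_iff, ih fun p hp => hR p (List.mem_cons_of_mem q hp)]
    have hIco : Ico (s + q.1) (s + q.1 + k * q.2) ⊆ Iio N ↔ s + q.1 + k * q.2 ≤ N := by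
      refine ⟨fun h => ?_, fun h x hx => ?_⟩
      · have := mem_Iio.1 (h (mem_Ico.2 (⟨by omega, by omega⟩ :
          s + q.1 ≤ s + q.1 + k * q.2 - 1 ∧ s + q.1 + k * q.2 - 1 < s + q.1 + k * q.2)))
        omega
      · rw [mem_Ico] at hx
        exact mem_Iio.2 (by omega)
    rw [hIco]
    simp only [List.map_cons, List.sum_cons, List.length_cons, ne_eq, reduceCtorEq,
      not_false_eq_true, forall_const, mul_add]
    rcases eq_or_ne R [] with rfl | hne
    · simp only [not_true_eq_false, IsEmpty.forall_iff, and_true, List.map_nil, List.sum_nil,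
        List.length_nil]
      omega
    · have := List.length_pos_iff.2 hne
      simp only [hne, not_false_eq_true, forall_const]
      omega

theorem mem_cover_cons_of_le {g c x : ℕ} (hx : x ≤ s + g + k * c) :
    x ∈ cover k s ((g, c) :: R) ↔ s + g ≤ x ∧ x < s + g + k * c := by
  have : x ∉ cover k (s + g + k * c + 1) R := fun h => by have := le_of_mem_cover h; omega
  rw [cover, mem_union, mem_Ico]
  tauto

theorem eq_of_cover_eq (hk : 1 ≤ k) {R' : List (ℕ × ℕ)} (hR : ∀ p ∈ R, 1 ≤ p.2)
    (hR' : ∀ p ∈ R', 1 ≤ p.2) (h : cover k s R = cover k s R') : R = R' := by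
  have head_mem : ∀ {s g c : ℕ} {R : List (ℕ × ℕ)}, 1 ≤ c → s + g ∈ cover k s ((g, c) :: R) :=
    fun hc => (mem_cover_cons_of_le (by omega)).2 ⟨le_rfl, by have := Nat.mul_le_mul hk hc; omega⟩
  induction R generalizing s R' with
  | nil =>
    obtain - | ⟨⟨g', c'⟩, R'⟩ := R'
    · rfl
    · have := head_mem (s := s) (g := g') (R := R') (hR' _ List.mem_cons_self)
      rw [← h] at this
      simp [cover] at this
  | cons p R ih =>
    obtain ⟨g, c⟩ := p
    obtain - | ⟨⟨g', c'⟩, R'⟩ := R'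
    · have := head_mem (s := s) (g := g) (R := R) (hR _ List.mem_cons_self)
      rw [h] at this
      simp [cover] at this
    have hc : 1 ≤ k * c := Nat.mul_le_mul hk (hR _ List.mem_cons_self)
    have hc' : 1 ≤ k * c' := Nat.mul_le_mul hk (hR' _ List.mem_cons_self)
    -- `s + g` is the least point of the cover and `s + g + k * c` the first gap after it.
    have hg : g = g' := by
      have hx := Finset.ext_iff.1 h (s + min g g')
      rw [mem_cover_cons_of_le (by omega), mem_cover_cons_of_le (by omega)] at hx
      omega
    subst hg
    have hkc : k * c = k * c' := by
      have hx := Finset.ext_iff.1 h (s + g + min (k * c) (k * c'))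
      rw [mem_cover_cons_of_le (by omega), mem_cover_cons_of_le (by omega)] at hx
      omega
    obtain rfl := Nat.eq_of_mul_eq_mul_left hk hkc
    rw [cover, cover] at h
    have htail := congrArg (· \ Ico (s + g) (s + g + k * c)) h
    simp only [union_sdiff_cancel_left disjoint_Ico_cover] at htail
    rw [ih (fun p hp => hR p (List.mem_cons_of_mem _ hp))
      (fun p hp => hR' p (List.mem_cons_of_mem _ hp)) htail]

end Layout

theorem exists_cover_eq {S : Finset ℕ} {s : ℕ} (hS : ∀ x ∈ S, s ≤ x) :
    ∃ R : List (ℕ × ℕ), (∀ p ∈ R, 1 ≤ p.2) ∧ cover 1 s R = S := by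
  induction S using Finset.strongInduction generalizing s with
  | H S ih =>
  rcases S.eq_empty_or_nonempty with rfl | hne
  · exact ⟨[], by simp, rfl⟩
  classical
  set y := S.min' hne
  have hex : ∃ c, y + c ∉ S := ⟨S.max' hne + 1 - y, fun h => by
    have := S.le_max' _ h
    have := S.min'_le _ (S.max'_mem hne)
    omega⟩
  set c := Nat.find hex
  have hcS : y + c ∉ S := Nat.find_spec hex
  have hc : 1 ≤ c := Nat.one_le_iff_ne_zero.2 fun h0 => hcS (by
    rw [h0, add_zero]
    exact S.min'_mem hne)
  have hrun : Ico y (y + c) ⊆ S := fun x hx => by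
    rw [mem_Ico] at hx
    simpa [show y + (x - y) = x by omega] using
      not_not.1 (Nat.find_min hex (show x - y < c by omega))
  have hrest : ∀ x ∈ S \ Ico y (y + c), y + c + 1 ≤ x := fun x hx => by
    rw [mem_sdiff, mem_Ico] at hx
    have := S.min'_le x hx.1
    have : x ≠ y + c := fun h => hcS (h ▸ hx.1)
    omega
  obtain ⟨R, hR, hcover⟩ := ih _ (sdiff_ssubset hrun (nonempty_Ico.2 (by omega))) hrest
  refine ⟨(y - s, c) :: R, ?_, ?_⟩
  · simpa [hc] using hR
  · rw [cover, one_mul, show s + (y - s) = y from Nat.add_sub_of_le (hS y (S.min'_mem hne)),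
      hcover, union_sdiff_of_subset hrun]

def blockProd (s : ℕ) (R : List (ℕ × ℕ)) : Perm ℕ :=
  ((layout 2 s R).map fun p => blockPerm p.1 p.2).prod

theorem pairwise_disjoint_blockPerm {B : List (ℕ × ℕ)} (hB : B.Pairwise (Separated 2)) :
    (B.map fun p => blockPerm p.1 p.2).Pairwise Perm.Disjoint :=
  List.pairwise_map.2 (hB.imp fun h => blockPerm_disjoint (by unfold Separated at h; omega))

section BlockProd

variable {s : ℕ} {R : List (ℕ × ℕ)}

theorem blockProd_apply_ne_self_iff {x : ℕ} : blockProd s R x ≠ x ↔ x ∈ cover 2 s R := by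
  rw [blockProd, prod_apply_ne_self_iff_of_pairwise_disjoint
    (pairwise_disjoint_blockPerm pairwise_separated_layout), mem_cover]
  simp [blockPerm_apply_ne_self_iff]

theorem ncard_blockProd_ne_self :
    {x | blockProd s R x ≠ x}.ncard = 2 * (R.map Prod.snd).sum := by
  rw [show {x | blockProd s R x ≠ x} = ↑(cover 2 s R) from
    Set.ext fun x => blockProd_apply_ne_self_iff, Set.ncard_coe_finset, card_cover]

theorem eq_of_blockProd_eq {R' : List (ℕ × ℕ)} (hR : ∀ p ∈ R, 1 ≤ p.2)
    (hR' : ∀ p ∈ R', 1 ≤ p.2) (h : blockProd s R = blockProd s R') : R = R' :=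
  eq_of_cover_eq one_le_two hR hR' <| Finset.ext fun x => by
    rw [← blockProd_apply_ne_self_iff, ← blockProd_apply_ne_self_iff, h]

end BlockProd

theorem exists_blocks_of_isKostant {n : ℕ} {w : Perm ℕ} (hw : IsKostant n w) :
    ∃ B : List (ℕ × ℕ), (∀ p ∈ B, 1 ≤ p.1 ∧ 1 ≤ p.2 ∧ p.1 + 2 * p.2 ≤ n + 1) ∧
      B.Pairwise (fun p q => Separated 2 p q ∨ Separated 2 q p) ∧
      (B.map fun p => blockPerm p.1 p.2).prod = w := by
  obtain ⟨L, hL, hD, rfl⟩ := hw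
  have hji : ∀ p ∈ L, p.2 < p.1 := fun p hp => by
    have := hL p hp
    unfold SpecialParams at this
    omega
  refine ⟨L.map fun p => (p.1 - p.2, p.2 + 1), ?_, ?_, ?_⟩
  · simp only [List.forall_mem_map]
    intro p hp
    have := hL p hp
    unfold SpecialParams at this
    omega
  · refine List.pairwise_map.2 (hD.imp_of_mem fun {p q} hp hq h => ?_)
    have hp' := hji p hp
    have hq' := hji q hq
    have := (distant_iff hp' hq').1 h
    unfold Separated
    omega
  · rw [List.map_map]
    exact congrArg _ <| List.map_congr_left fun p hp =>
      (sigmaPerm_eq_blockPerm (hji p hp).le).symm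

theorem isKostant_of_blocks {n : ℕ} {B : List (ℕ × ℕ)}
    (hB : ∀ p ∈ B, 1 ≤ p.1 ∧ 1 ≤ p.2 ∧ p.1 + 2 * p.2 ≤ n + 1)
    (hsep : B.Pairwise fun p q => Separated 2 p q ∨ Separated 2 q p) :
    IsKostant n (B.map fun p => blockPerm p.1 p.2).prod := by
  refine ⟨B.map fun p => (p.1 + p.2 - 1, p.2 - 1), ?_, ?_, ?_⟩
  · simp only [List.forall_mem_map]
    intro p hp
    have := hB p hp
    unfold SpecialParams
    omega
  · refine List.pairwise_map.2 (hsep.imp_of_mem fun {p q} hp hq h => ?_)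
    have hp' := hB p hp
    have hq' := hB q hq
    unfold Separated at h
    rw [distant_iff (by omega) (by omega)]
    omega
  · rw [List.map_map]
    refine congrArg _ (List.map_congr_left fun p hp => ?_)
    have := hB p hp
    rw [Function.comp_apply, sigmaPerm_eq_blockPerm (by omega)]
    congr 1 <;> omega

theorem isKostant_iff {n : ℕ} {w : Perm ℕ} :
    IsKostant n w ↔ ∃ R : List (ℕ × ℕ), (∀ p ∈ R, 1 ≤ p.2) ∧ cover 2 1 R ⊆ Iio (n + 1) ∧
      blockProd 1 R = w := by
  constructor
  · intro hw
    obtain ⟨B, hB, hsep, rfl⟩ := exists_blocks_of_isKostant hw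
    obtain ⟨B', hperm, hB'⟩ := exists_perm_pairwise_separated hsep
    have hmem : ∀ p ∈ B', 1 ≤ p.1 ∧ 1 ≤ p.2 ∧ p.1 + 2 * p.2 ≤ n + 1 :=
      fun p hp => hB p (hperm.subset hp)
    obtain ⟨R, hR⟩ := exists_layout_eq hB' fun p hp => (hmem p hp).1
    refine ⟨R, fun q hq => ?_, fun x hx => ?_, ?_⟩
    · exact forall_mem_layout_snd.1 (hR ▸ fun p hp => (hmem p hp).2.1) q hq
    · obtain ⟨p, hp, hpx, hxp⟩ := mem_cover.1 hx
      have := hmem p (hR ▸ hp)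
      exact mem_Iio.2 (by omega)
    · rw [blockProd, hR]
      exact (hperm.map _).prod_eq' ((pairwise_disjoint_blockPerm hB').imp Perm.Disjoint.commute)
  · rintro ⟨R, hR, hcover, rfl⟩
    refine isKostant_of_blocks (fun p hp => ?_) (pairwise_separated_layout.imp Or.inl)
    have hc : 1 ≤ p.2 := forall_mem_layout_snd.2 hR p hp
    have hend : p.1 + 2 * p.2 - 1 ∈ cover 2 1 R := mem_cover.2 ⟨p, hp, by omega, by omega⟩
    have := mem_Iio.1 (hcover hend)
    exact ⟨le_fst_of_mem_layout hp, hc, by omega⟩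

def kostantCodes (n a : ℕ) : Set (List (ℕ × ℕ)) :=
  {R | (∀ p ∈ R, 1 ≤ p.2) ∧ cover 2 1 R ⊆ Iio (n + 1) ∧ (R.map Prod.snd).sum = a}

theorem setOf_isKostant_eq_image (n a : ℕ) :
    {w : Perm ℕ | IsKostant n w ∧ {k | w k ≠ k}.ncard = 2 * a} =
      blockProd 1 '' kostantCodes n a := by
  ext w
  simp only [Set.mem_ofPred_eq, isKostant_iff, Set.mem_image, kostantCodes]
  constructor
  · rintro ⟨⟨R, hR, hcover, rfl⟩, hcard⟩
    rw [ncard_blockProd_ne_self] at hcard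
    exact ⟨R, ⟨hR, hcover, by omega⟩, rfl⟩
  · rintro ⟨R, ⟨hR, hcover, rfl⟩, rfl⟩
    exact ⟨⟨R, hR, hcover, rfl⟩, ncard_blockProd_ne_self⟩

theorem coe_powersetCard_eq_image (n a : ℕ) :
    (powersetCard a (Icc 1 (n - a)) : Set (Finset ℕ)) = cover 1 1 '' kostantCodes n a := by
  ext S
  simp only [mem_coe, mem_powersetCard, Set.mem_image, kostantCodes, Set.mem_ofPred_eq]
  constructor
  · rintro ⟨hsub, hcard⟩
    obtain ⟨R, hR, rfl⟩ := exists_cover_eq fun x hx => (mem_Icc.1 (hsub hx)).1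
    rw [card_cover, one_mul] at hcard
    have hbound := (cover_subset_Iio_iff (N := n - a + 1) le_rfl hR).1
      fun x hx => mem_Iio.2 (by have := (mem_Icc.1 (hsub hx)).2; omega)
    refine ⟨R, ⟨hR, (cover_subset_Iio_iff one_le_two hR).2 fun hne => ?_, hcard⟩, rfl⟩
    have := hbound hne
    have := List.length_pos_iff.2 hne
    omega
  · rintro ⟨R, ⟨hR, hcover, rfl⟩, rfl⟩
    have hbound :=
      (cover_subset_Iio_iff (s := 1) (N := n - (R.map Prod.snd).sum + 1) le_rfl hR).2 fun hne => by
        have := (cover_subset_Iio_iff one_le_two hR).1 hcover hne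
        have := List.length_pos_iff.2 hne
        omega
    refine ⟨fun x hx => mem_Icc.2 ⟨le_of_mem_cover hx, ?_⟩, by rw [card_cover, one_mul]⟩
    have := mem_Iio.1 (hbound hx)
    omega

end Kostant

open Kostant in
theorem ki_eq_choose_general (n a : ℕ) :
    ki n a = Nat.choose (n - a) a := by
  rw [ki, setOf_isKostant_eq_image,
    Set.InjOn.ncard_image fun R hR R' hR' => eq_of_blockProd_eq hR.1 hR'.1,
    ← Set.InjOn.ncard_image (f := cover 1 1)
      fun R hR R' hR' => eq_of_cover_eq le_rfl hR.1 hR'.1,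
    ← coe_powersetCard_eq_image, Set.ncard_coe_finset, card_powersetCard, Nat.card_Icc,
    Nat.add_sub_cancel]

/-- The number of Kostant involutions in `S_n` with exactly `a` transpositions is the
binomial coefficient `C(n-a, a)`. -/
theorem ki_eq_choose (n a : ℕ) (hn : 1 ≤ n) (ha : a ≤ n / 2) :
    ki n a = Nat.choose (n - a) a :=
  ki_eq_choose_general n a
end

section
/- For every n ≥ 1, the total number of Kostant involutions in S_n equals the Fibonacci number F_{n+1}, where the Fibonacci sequence is normalized so that F_0 = 0, F_1 = 1 and F_{m} = F_{m−1} + F_{m−2} (so the counts for n = 1, 2, 3, 4, 5 are 1, 2, 3, 5, 8). -/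
/-- The total number of Kostant involutions in `S_n`. -/
noncomputable def kiTotal (n : ℕ) : ℕ :=
  Set.ncard {w : Equiv.Perm ℕ | IsKostant n w}

/-!
The factors `σ_{i,j}` of a Kostant involution move pairwise separated intervals
`[i-j, i+j+1]`, so the involution `w` determines them: `σ_{i,j}` is a factor iff
`w (i-j) = i+1` and `w` fixes `i-j-1`. Kostant involutions of `S_n` are thus counted by the
families of pairwise separated even-length intervals in `[1, n]`. Such a family in `[1, n+2]`
either avoids `n+2` (a family in `[1, n+1]`), or ends with `{n+1, n+2}` after a gap (remove it:
a family in `[1, n]` avoiding `n`), or ends with a longer interval through `n+2` (shorten it by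
two: a family in `[1, n]` reaching `n`). So the counts satisfy the Fibonacci recurrence.
-/

lemma specialParams_iff {n i j : ℕ} : SpecialParams n i j ↔ j < i ∧ i + j < n := by
  unfold SpecialParams
  omega

instance (n i j : ℕ) : Decidable (SpecialParams n i j) :=
  decidable_of_iff _ specialParams_iff.symm

instance : DecidableRel Distant := fun _ _ => inferInstanceAs (Decidable (_ ≤ 1))

instance inst_s4 : Std.Symm Distant := ⟨fun _ _ h => by rwa [Distant, Finset.inter_comm]⟩

lemma Distant.ne {p q : ℕ × ℕ} (h : Distant p q) : p ≠ q := by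
  rintro rfl
  rw [Distant, extSupport, Finset.inter_self, Nat.card_Icc] at h
  omega

lemma distant_iff {p q : ℕ × ℕ} (hp : p.2 < p.1) (hq : q.2 < q.1) :
    Distant p q ↔ p.1 + p.2 + 3 ≤ q.1 - q.2 ∨ q.1 + q.2 + 3 ≤ p.1 - p.2 := by
  have hinter (a b c d : ℕ) :
      Finset.Icc a b ∩ Finset.Icc c d = Finset.Icc (max a c) (min b d) := by
    ext
    simp only [Finset.mem_inter, Finset.mem_Icc]
    omega
  rw [Distant, extSupport, extSupport, hinter, Nat.card_Icc]
  omega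

namespace Equiv.Perm

variable {α : Type*} {l : List (Perm α)} {σ : Perm α} {x : α}

lemma list_prod_apply_eq_self_of_forall (h : ∀ σ ∈ l, σ x = x) : l.prod x = x := by
  induction l with
  | nil => rfl
  | cons τ l ih =>
    rw [List.prod_cons, mul_apply, ih fun σ hσ => h σ (List.mem_cons_of_mem τ hσ),
      h τ List.mem_cons_self]

lemma list_prod_apply_of_mem (hl : l.Pairwise Disjoint) (hσ : σ ∈ l) (hx : σ x ≠ x) :
    l.prod x = σ x := by
  induction l with
  | nil => cases hσ
  | cons τ l ih =>
    rw [List.pairwise_cons] at hl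
    rw [List.prod_cons, mul_apply]
    rcases List.mem_cons.mp hσ with rfl | hσ
    · rw [(disjoint_prod_right l hl.1 x).resolve_left hx]
    · rw [ih hl.2 hσ, (hl.1 σ hσ (σ x)).resolve_right (σ.injective.ne hx)]

lemma list_prod_apply_eq_self_iff (hl : l.Pairwise Disjoint) :
    l.prod x = x ↔ ∀ σ ∈ l, σ x = x :=
  ⟨fun h _ hσ => by_contra fun hx => hx ((list_prod_apply_of_mem hl hσ hx).symm.trans h),
    list_prod_apply_eq_self_of_forall⟩

end Equiv.Perm

open Equiv Perm

section sigmaPerm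

variable {i j t x : ℕ}

lemma pairwise_disjoint_swaps (hj : j ≤ i) :
    ((List.range (j + 1)).map fun t => swap (i - j + t) (i + t + 1)).Pairwise Disjoint := by
  rw [List.pairwise_map]
  refine List.nodup_range.imp_of_mem fun {s t} hs ht hst => disjoint_swap_swap ?_
  rw [List.mem_range] at hs ht
  simp only [List.nodup_cons, List.mem_cons, List.not_mem_nil, List.nodup_nil, or_false,
    not_false_eq_true, and_true]
  omega

lemma swap_mem_factors (ht : t ≤ j) :
    swap (i - j + t) (i + t + 1) ∈
      (List.range (j + 1)).map fun t => swap (i - j + t) (i + t + 1) :=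
  List.mem_map_of_mem (List.mem_range.mpr (by omega))

lemma sigmaPerm_apply_of_lt_or_lt (hx : x < i - j ∨ i + j + 1 < x) : sigmaPerm i j x = x :=
  list_prod_apply_eq_self_of_forall <| by
    simp only [List.mem_map, List.mem_range]
    rintro _ ⟨t, ht, rfl⟩
    exact swap_apply_of_ne_of_ne (by omega) (by omega)

lemma sigmaPerm_apply_lower (hj : j ≤ i) (hx₁ : i - j ≤ x) (hx₂ : x ≤ i) :
    sigmaPerm i j x = x + (j + 1) := by
  obtain ⟨t, ht, rfl⟩ : ∃ t ≤ j, x = i - j + t := ⟨x - (i - j), by omega, by omega⟩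
  rw [sigmaPerm, list_prod_apply_of_mem (pairwise_disjoint_swaps hj) (swap_mem_factors ht),
    swap_apply_left]
  · omega
  · rw [swap_apply_left]
    omega

lemma sigmaPerm_apply_upper (hj : j ≤ i) (hx₁ : i < x) (hx₂ : x ≤ i + j + 1) :
    sigmaPerm i j x = x - (j + 1) := by
  obtain ⟨t, ht, rfl⟩ : ∃ t ≤ j, x = i + t + 1 := ⟨x - i - 1, by omega, by omega⟩
  rw [sigmaPerm, list_prod_apply_of_mem (pairwise_disjoint_swaps hj) (swap_mem_factors ht),
    swap_apply_right]
  · omega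
  · rw [swap_apply_right]
    omega

lemma sigmaPerm_apply_eq_self_iff (hj : j ≤ i) :
    sigmaPerm i j x = x ↔ x < i - j ∨ i + j + 1 < x := by
  refine ⟨fun h => ?_, sigmaPerm_apply_of_lt_or_lt⟩
  by_contra hx
  rcases le_or_gt x i with hxi | hxi
  · rw [sigmaPerm_apply_lower hj (by omega) hxi] at h
    omega
  · rw [sigmaPerm_apply_upper hj hxi (by omega)] at h
    omega

lemma disjoint_sigmaPerm {p q : ℕ × ℕ} (hp : p.2 < p.1) (hq : q.2 < q.1) (h : Distant p q) :
    (sigmaPerm p.1 p.2).Disjoint (sigmaPerm q.1 q.2) := by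
  rw [distant_iff hp hq] at h
  intro x
  by_cases hx : x < p.1 - p.2 ∨ p.1 + p.2 + 1 < x
  · exact .inl (sigmaPerm_apply_of_lt_or_lt hx)
  · exact .inr (sigmaPerm_apply_of_lt_or_lt (by omega))

end sigmaPerm

def IsConfig (n : ℕ) (C : Finset (ℕ × ℕ)) : Prop :=
  (∀ p ∈ C, SpecialParams n p.1 p.2) ∧ (C : Set (ℕ × ℕ)).Pairwise Distant

instance (n : ℕ) : DecidablePred (IsConfig n) := fun _ => inferInstanceAs (Decidable (_ ∧ _))

noncomputable def configProd (C : Finset (ℕ × ℕ)) : Perm ℕ :=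
  (C.toList.map fun p => sigmaPerm p.1 p.2).prod

namespace IsConfig

variable {n : ℕ} {C : Finset (ℕ × ℕ)}

lemma snd_lt_fst (hC : IsConfig n C) {p : ℕ × ℕ} (hp : p ∈ C) : p.2 < p.1 :=
  (specialParams_iff.mp (hC.1 p hp)).1

lemma pairwise_disjoint (hC : IsConfig n C) :
    (C.toList.map fun p => sigmaPerm p.1 p.2).Pairwise Disjoint := by
  rw [List.pairwise_map]
  refine C.nodup_toList.pairwise_of_forall_ne fun p hp q hq hpq => ?_
  rw [Finset.mem_toList] at hp hq
  exact disjoint_sigmaPerm (hC.snd_lt_fst hp) (hC.snd_lt_fst hq) (hC.2 hp hq hpq)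

lemma mem_iff_configProd_apply (hC : IsConfig n C) {i j : ℕ} :
    (i, j) ∈ C ↔ configProd C (i - j) = i + 1 ∧ configProd C (i - j - 1) = i - j - 1 := by
  have hl := hC.pairwise_disjoint
  have hmem {a b : ℕ} (h : (a, b) ∈ C) :
      sigmaPerm a b ∈ C.toList.map fun p => sigmaPerm p.1 p.2 :=
    List.mem_map_of_mem (f := fun p => sigmaPerm p.1 p.2) (Finset.mem_toList.mpr h)
  constructor
  · intro hij
    have hji : j < i := hC.snd_lt_fst hij
    refine ⟨?_, list_prod_apply_eq_self_of_forall ?_⟩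
    · have hval : sigmaPerm i j (i - j) = i + 1 := by
        rw [sigmaPerm_apply_lower hji.le le_rfl (by omega)]
        omega
      rw [configProd, list_prod_apply_of_mem hl (hmem hij) (by omega), hval]
    · simp only [List.mem_map, Finset.mem_toList]
      rintro _ ⟨⟨a, b⟩, hab, rfl⟩
      apply sigmaPerm_apply_of_lt_or_lt
      obtain hab_eq | hab_ne := eq_or_ne (a, b) (i, j)
      · obtain ⟨rfl, rfl⟩ := Prod.mk.inj hab_eq
        omega
      · have := (distant_iff (hC.snd_lt_fst hab) hji).mp (hC.2 hab hij hab_ne)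
        dsimp only at this
        omega
  · rintro ⟨hstart, hbefore⟩
    obtain ⟨_, hσ, hmoved⟩ :
        ∃ σ ∈ C.toList.map fun p => sigmaPerm p.1 p.2, σ (i - j) ≠ i - j := by
      by_contra! h
      rw [configProd, (list_prod_apply_eq_self_iff hl).mpr h] at hstart
      omega
    obtain ⟨⟨a, b⟩, hab, rfl⟩ := List.mem_map.mp hσ
    rw [Finset.mem_toList] at hab
    have hba : b < a := hC.snd_lt_fst hab
    have hfix := (list_prod_apply_eq_self_iff hl).mp hbefore _ (hmem hab)
    rw [configProd, list_prod_apply_of_mem hl (hmem hab) hmoved] at hstart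
    rw [Ne, sigmaPerm_apply_eq_self_iff hba.le] at hmoved
    rw [sigmaPerm_apply_eq_self_iff hba.le] at hfix
    rw [sigmaPerm_apply_lower hba.le (by omega) (by omega)] at hstart
    obtain ⟨rfl, rfl⟩ : a = i ∧ b = j := by omega
    exact hab

end IsConfig

lemma isKostant_iff {n : ℕ} {w : Perm ℕ} :
    IsKostant n w ↔ ∃ C, IsConfig n C ∧ configProd C = w := by
  constructor
  · rintro ⟨L, hL, hLd, rfl⟩
    have hC : IsConfig n L.toFinset := ⟨fun p hp => hL p (List.mem_toFinset.mp hp),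
      by rw [List.coe_toFinset]; exact hLd.set_pairwise⟩
    have hperm := (List.toFinset_toList (hLd.imp Distant.ne)).map fun p => sigmaPerm p.1 p.2
    exact ⟨_, hC, hperm.prod_eq' (hC.pairwise_disjoint.imp Disjoint.commute)⟩
  · rintro ⟨C, hC, rfl⟩
    refine ⟨C.toList, fun p hp => hC.1 p (Finset.mem_toList.mp hp), ?_, rfl⟩
    exact C.nodup_toList.pairwise_of_forall_ne fun p hp q hq =>
      hC.2 (Finset.mem_toList.mp hp) (Finset.mem_toList.mp hq)

def configs (n : ℕ) : Finset (Finset (ℕ × ℕ)) :=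
  (Finset.range n ×ˢ Finset.range n).powerset.filter (IsConfig n)

lemma mem_configs {n : ℕ} {C : Finset (ℕ × ℕ)} : C ∈ configs n ↔ IsConfig n C := by
  rw [configs, Finset.mem_filter, Finset.mem_powerset, and_iff_right_iff_imp]
  intro hC p hp
  have := specialParams_iff.mp (hC.1 p hp)
  rw [Finset.mem_product, Finset.mem_range, Finset.mem_range]
  omega

lemma kiTotal_eq_card_configs (n : ℕ) : kiTotal n = (configs n).card := by
  have hinj : Set.InjOn configProd (configs n) := fun C hC D hD h => by
    rw [Finset.mem_coe, mem_configs] at hC hD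
    ext ⟨i, j⟩
    rw [hC.mem_iff_configProd_apply, hD.mem_iff_configProd_apply, h]
  have hset : {w | IsKostant n w} = configProd '' (configs n : Set (Finset (ℕ × ℕ))) := by
    ext w
    simp only [Set.mem_ofPred_eq, Set.mem_image, Finset.mem_coe, mem_configs, isKostant_iff]
  rw [kiTotal, hset, hinj.ncard_image, Set.ncard_coe_finset]

lemma Finset.image_eq_insert_erase {α : Type*} [DecidableEq α] {f : α → α} {s : Finset α}
    {a : α} (ha : a ∈ s) (hf : ∀ x ∈ s.erase a, f x = x) :
    s.image f = insert (f a) (s.erase a) := by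
  conv_lhs => rw [← Finset.insert_erase ha]
  rw [Finset.image_insert, Finset.image_congr hf, Finset.image_id']

namespace IsConfig

variable {m n : ℕ} {C : Finset (ℕ × ℕ)}

lemma mono (hC : IsConfig m C) (h : ∀ p ∈ C, p.1 + p.2 < n) : IsConfig n C :=
  ⟨fun p hp => specialParams_iff.mpr ⟨hC.snd_lt_fst hp, h p hp⟩, hC.2⟩

lemma subset (hC : IsConfig n C) {D : Finset (ℕ × ℕ)} (h : D ⊆ C) : IsConfig n D :=
  ⟨fun p hp => hC.1 p (h hp), hC.2.mono (Finset.coe_subset.mpr h)⟩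

protected lemma insert (hC : IsConfig n C) {p : ℕ × ℕ} (hp : SpecialParams n p.1 p.2)
    (h : ∀ q ∈ C, q.1 + q.2 + 3 ≤ p.1 - p.2) : IsConfig n (insert p C) := by
  refine ⟨Finset.forall_mem_insert _ _ _ |>.mpr ⟨hp, hC.1⟩, ?_⟩
  rw [Finset.coe_insert, Set.pairwise_insert_of_symm]
  exact ⟨hC.2, fun q hq _ =>
    (distant_iff (specialParams_iff.mp hp).1 (hC.snd_lt_fst hq)).mpr (.inr (h q hq))⟩

lemma add_three_le_of_mem_erase (hC : IsConfig n C) {p q : ℕ × ℕ} (hp : p ∈ C)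
    (hpn : n ≤ p.1 + p.2 + 3) (hq : q ∈ C.erase p) : q.1 + q.2 + 3 ≤ p.1 - p.2 := by
  obtain ⟨hqp, hq⟩ := Finset.mem_erase.mp hq
  have := specialParams_iff.mp (hC.1 q hq)
  have := (distant_iff (hC.snd_lt_fst hq) (hC.snd_lt_fst hp)).mp (hC.2 hq hp hqp)
  omega

lemma insert_erase (hC : IsConfig m C) {p : ℕ × ℕ} (hp : p ∈ C) (hpm : m ≤ p.1 + p.2 + 3)
    {i j : ℕ} (hij : SpecialParams n i j) (hstart : i - j = p.1 - p.2) :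
    IsConfig n (insert (i, j) (C.erase p)) := by
  have hbefore (q) (hq : q ∈ C.erase p) : q.1 + q.2 + 3 ≤ i - j :=
    hstart ▸ hC.add_three_le_of_mem_erase hp hpm hq
  refine ((hC.subset (Finset.erase_subset p C)).mono fun q hq => ?_).insert hij hbefore
  have := specialParams_iff.mp hij
  have := hbefore q hq
  omega

end IsConfig

def EndsAt (m : ℕ) (C : Finset (ℕ × ℕ)) : Prop := ∃ p ∈ C, p.1 + p.2 + 1 = m

instance (m : ℕ) : DecidablePred (EndsAt m) :=
  fun _ => inferInstanceAs (Decidable (∃ _ ∈ _, _))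

lemma filter_not_endsAt_configs (n : ℕ) :
    (configs (n + 2)).filter (fun C => ¬ EndsAt (n + 2) C) = configs (n + 1) := by
  ext C
  simp only [Finset.mem_filter, mem_configs, EndsAt, not_exists, not_and]
  refine ⟨fun ⟨hC, h⟩ => hC.mono fun p hp => ?_,
    fun hC => ⟨hC.mono fun p hp => ?_, fun p hp => ?_⟩⟩
  · have := specialParams_iff.mp (hC.1 p hp)
    have := h p hp
    omega
  all_goals
    have := specialParams_iff.mp (hC.1 p hp)
    omega

lemma card_filter_configs_add_two_mem (n : ℕ) :
    ((configs (n + 2)).filter ((n + 1, 0) ∈ ·)).card =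
      ((configs n).filter (fun C => ¬ EndsAt n C)).card := by
  refine Finset.card_bij' (fun C _ => C.erase (n + 1, 0)) (fun D _ => insert (n + 1, 0) D)
    (fun C hC => ?_) (fun D hD => ?_) (fun C hC => ?_) (fun D hD => ?_)
  · simp only [Finset.mem_filter, mem_configs, EndsAt, not_exists, not_and] at hC ⊢
    have hbefore (q) (hq : q ∈ C.erase (n + 1, 0)) : q.1 + q.2 + 3 ≤ n + 1 :=
      hC.1.add_three_le_of_mem_erase hC.2 (by simp) hq
    refine ⟨(hC.1.subset (Finset.erase_subset _ _)).mono fun q hq => ?_, fun q hq => ?_⟩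
    all_goals
      have := hbefore q hq
      omega
  · simp only [Finset.mem_filter, mem_configs, EndsAt, not_exists, not_and] at hD ⊢
    have hbefore (q) (hq : q ∈ D) : q.1 + q.2 + 3 ≤ n + 1 := by
      have := specialParams_iff.mp (hD.1.1 q hq)
      have := hD.2 q hq
      omega
    refine ⟨IsConfig.insert (hD.1.mono fun q hq => ?_) (specialParams_iff.mpr (by omega))
      hbefore, Finset.mem_insert_self _ _⟩
    have := hbefore q hq
    omega
  · exact Finset.insert_erase (Finset.mem_filter.mp hC).2
  · refine Finset.erase_insert fun h => ?_
    have := specialParams_iff.mp ((mem_configs.mp (Finset.mem_filter.mp hD).1).1 _ h)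
    omega

/-- Lengthens by two an interval `[i-j, i+j+1]` ending at `n`, shortens one ending at `n + 2`;
the positivity conditions make it an involution. -/
def stretch (n : ℕ) (p : ℕ × ℕ) : ℕ × ℕ :=
  if p.1 + p.2 + 1 = n then (p.1 + 1, p.2 + 1)
  else if p.1 + p.2 + 1 = n + 2 ∧ 0 < p.1 ∧ 0 < p.2 then (p.1 - 1, p.2 - 1) else p

lemma stretch_involutive (n : ℕ) : Function.Involutive (stretch n) := by
  rintro ⟨i, j⟩
  unfold stretch
  split_ifs <;> simp only [Prod.mk.injEq] at * <;> omega

lemma stretch_of_ne {n : ℕ} {p : ℕ × ℕ} (h₁ : p.1 + p.2 + 1 ≠ n)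
    (h₂ : p.1 + p.2 + 1 ≠ n + 2) : stretch n p = p := by
  rw [stretch, if_neg h₁, if_neg fun h => h₂ h.1]

lemma stretch_of_eq {n i j : ℕ} (h : i + j + 1 = n) : stretch n (i, j) = (i + 1, j + 1) :=
  if_pos h

lemma stretch_of_eq_add_two {n i j : ℕ} (h : i + j + 1 = n + 2) (hi : 0 < i) (hj : 0 < j) :
    stretch n (i, j) = (i - 1, j - 1) := by
  rw [stretch, if_neg (by dsimp only; omega), if_pos ⟨h, hi, hj⟩]

namespace IsConfig

variable {n : ℕ} {C : Finset (ℕ × ℕ)}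

lemma image_stretch_of_endsAt_add_two (hC : IsConfig (n + 2) C) (hends : EndsAt (n + 2) C)
    (hnot : (n + 1, 0) ∉ C) :
    IsConfig n (C.image (stretch n)) ∧ EndsAt n (C.image (stretch n)) := by
  obtain ⟨⟨i, j⟩, hij, hijn⟩ := hends
  dsimp only at hijn
  have hj : 0 < j :=
    Nat.pos_of_ne_zero fun hj => hnot (by rwa [hj, show i = n + 1 by omega] at hij)
  have hji : j < i := hC.snd_lt_fst hij
  have himage : C.image (stretch n) = insert (i - 1, j - 1) (C.erase (i, j)) := by
    rw [Finset.image_eq_insert_erase hij fun q hq => ?_, stretch_of_eq_add_two hijn (by omega) hj]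
    have := hC.add_three_le_of_mem_erase hij (by dsimp only; omega) hq
    dsimp only at this
    exact stretch_of_ne (by omega) (by omega)
  rw [himage]
  exact ⟨hC.insert_erase hij (by dsimp only; omega) (specialParams_iff.mpr (by omega))
    (by dsimp only; omega), _, Finset.mem_insert_self _ _, by omega⟩

lemma image_stretch_of_endsAt (hC : IsConfig n C) (hends : EndsAt n C) :
    IsConfig (n + 2) (C.image (stretch n)) ∧ EndsAt (n + 2) (C.image (stretch n)) ∧
      (n + 1, 0) ∉ C.image (stretch n) := by
  obtain ⟨⟨i, j⟩, hij, hijn⟩ := hends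
  dsimp only at hijn
  have hbefore {q : ℕ × ℕ} (hq : q ∈ C.erase (i, j)) : q.1 + q.2 + 3 ≤ i - j :=
    hC.add_three_le_of_mem_erase hij (by dsimp only; omega) hq
  have himage : C.image (stretch n) = insert (i + 1, j + 1) (C.erase (i, j)) := by
    rw [Finset.image_eq_insert_erase hij fun q hq => ?_, stretch_of_eq hijn]
    have := hbefore hq
    exact stretch_of_ne (by omega) (by omega)
  have := specialParams_iff.mp (hC.1 _ hij)
  dsimp only at this
  rw [himage, Finset.mem_insert, not_or]
  refine ⟨hC.insert_erase hij (by dsimp only; omega) (specialParams_iff.mpr (by omega))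
      (by dsimp only; omega), ⟨_, Finset.mem_insert_self _ _, by omega⟩,
    fun h => by simp at h, fun hmem => ?_⟩
  have := hbefore hmem
  dsimp only at this
  omega

end IsConfig

lemma card_filter_configs_add_two_endsAt (n : ℕ) :
    ((configs (n + 2)).filter (fun C => EndsAt (n + 2) C ∧ (n + 1, 0) ∉ C)).card =
      ((configs n).filter (EndsAt n)).card := by
  have hinv (C : Finset (ℕ × ℕ)) : (C.image (stretch n)).image (stretch n) = C := by
    rw [Finset.image_image, (stretch_involutive n).comp_self, Finset.image_id]
  refine Finset.card_bij' (fun C _ => C.image (stretch n)) (fun D _ => D.image (stretch n))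
    (fun C hC => ?_) (fun D hD => ?_) (fun C _ => hinv C) (fun D _ => hinv D)
  · simp only [Finset.mem_filter, mem_configs] at hC ⊢
    exact hC.1.image_stretch_of_endsAt_add_two hC.2.1 hC.2.2
  · simp only [Finset.mem_filter, mem_configs] at hD ⊢
    exact hD.1.image_stretch_of_endsAt hD.2

lemma card_configs_add_two (n : ℕ) :
    (configs (n + 2)).card = (configs (n + 1)).card + (configs n).card := by
  have hlast : ((configs (n + 2)).filter (EndsAt (n + 2))).filter ((n + 1, 0) ∈ ·) =
      (configs (n + 2)).filter ((n + 1, 0) ∈ ·) := by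
    rw [Finset.filter_filter]
    exact Finset.filter_congr fun C _ => and_iff_right_of_imp fun h => ⟨_, h, by simp⟩
  have h₁ := Finset.card_filter_add_card_filter_not (s := configs (n + 2)) (EndsAt (n + 2))
  have h₂ := Finset.card_filter_add_card_filter_not
    (s := (configs (n + 2)).filter (EndsAt (n + 2))) ((n + 1, 0) ∈ ·)
  have h₃ := Finset.card_filter_add_card_filter_not (s := configs n) (EndsAt n)
  rw [filter_not_endsAt_configs] at h₁
  rw [hlast, Finset.filter_filter, card_filter_configs_add_two_mem,
    card_filter_configs_add_two_endsAt] at h₂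
  omega

lemma card_configs (n : ℕ) : (configs n).card = Nat.fib (n + 1) := by
  induction n using Nat.twoStepInduction with
  | zero => decide
  | one => decide
  | more n ih₀ ih₁ =>
    rw [card_configs_add_two, ih₀, ih₁, Nat.fib_add_two (n := n + 1), add_comm]

theorem kiTotal_eq_fib_general (n : ℕ) : kiTotal n = Nat.fib (n + 1) := by
  rw [kiTotal_eq_card_configs, card_configs]

/-- The total number of Kostant involutions in `S_n` is the Fibonacci number `F_{n+1}`
(with `F_0 = 0`, `F_1 = 1`). -/
theorem kiTotal_eq_fib (n : ℕ) (hn : 1 ≤ n) : kiTotal n = Nat.fib (n + 1) :=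
  kiTotal_eq_fib_general n
end

section
/- Let mi_n denote the number of 321-avoiding involutions in S_n, with the convention mi_0 = 1. Then for every n ≥ 1, mi_n = mi_{n−1} + Σ_{i=1}^{⌊n/2⌋} C_{i−1} · mi_{n−2i}, where C_m denotes the m-th Catalan number C_m = (1/(m+1))·binom(2m, m). -/
/-- `w` is a permutation of `{1,…,n}` (i.e. fixes every point outside `{1,…,n}`)
which is an involution: `w² = 1`. -/
def IsInvolutionOn (n : ℕ) (w : Equiv.Perm ℕ) : Prop :=
  (∀ k : ℕ, w k ≠ k → 1 ≤ k ∧ k ≤ n) ∧ w * w = 1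

/-- `mi n` is the number of 321-avoiding involutions in `S_n`. -/
noncomputable def mi (n : ℕ) : ℕ :=
  Set.ncard {w : Equiv.Perm ℕ | IsInvolutionOn n w ∧ Avoids321 n w}

/-!
Read a 321-avoiding involution `w` of `{1, …, n}` as a path whose `j`-th step is `1`, `0` or `-1`
according as `j < w j`, `w j = j` or `w j < j`. Avoiding 321 forces `w` to be increasing on the
openers `j < w j`, so `w` joins the `i`-th opener to the `i`-th closer, and no arc passes over a
fixed point. Hence the paths that occur are exactly the Motzkin paths whose flat steps all lie on
the axis, and `w` is recovered from its path. Such a path of length `n ≥ 1` is cut at its first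
return to the axis: it starts either with a flat step, followed by a path of length `n - 1`, or
with `U d D` for one of the `C_{i-1}` Dyck words `d` of semilength `i - 1`, followed by a path of
length `n - 2i`.
-/

open Finset

lemma List.sum_take_append (a b : List ℤ) (k : ℕ) :
    ((a ++ b).take k).sum = (a.take k).sum + (b.take (k - a.length)).sum := by
  rw [List.take_append, List.sum_append]

lemma List.sum_take_drop (l : List ℤ) (j k : ℕ) :
    ((l.drop j).take k).sum = (l.take (j + k)).sum - (l.take j).sum := by
  rw [List.take_add, List.sum_append]
  ring

lemma Finset.sum_eq_card_filter_sub_card_filter {α : Type*} {s : Finset α} {g : α → ℤ}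
    (hg : ∀ j ∈ s, g j = 1 ∨ g j = 0 ∨ g j = -1) :
    ∑ j ∈ s, g j = #(s.filter (g · = 1)) - #(s.filter (g · = -1)) := by
  rw [card_filter, card_filter]
  push_cast
  rw [← sum_sub_distrib]
  refine sum_congr rfl fun j hj => ?_
  rcases hg j hj with h | h | h <;> simp [h]

lemma List.sum_take_eq_sum_Icc (l : List ℤ) {k : ℕ} (hk : k ≤ l.length) :
    (l.take k).sum = ∑ j ∈ Icc 1 k, l.getD (j - 1) 0 := by
  induction k with
  | zero => simp
  | succ k ih =>
    rw [List.sum_take_succ l k hk, ih (by omega), sum_Icc_succ_top (by omega), Nat.add_sub_cancel,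
      List.getD_eq_getElem _ _ hk]

lemma List.sum_take_eq_card_sub_card {l : List ℤ} (hl : ∀ x ∈ l, x = 1 ∨ x = 0 ∨ x = -1) {k : ℕ}
    (hk : k ≤ l.length) :
    (l.take k).sum = #((Icc 1 k).filter fun j => l.getD (j - 1) 0 = 1) -
      #((Icc 1 k).filter fun j => l.getD (j - 1) 0 = -1) := by
  rw [l.sum_take_eq_sum_Icc hk]
  refine sum_eq_card_filter_sub_card_filter fun j hj => hl _ ?_
  rw [mem_Icc] at hj
  rw [List.getD_eq_getElem _ _ (by omega)]
  exact List.getElem_mem _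

lemma Finset.eqOn_of_strictMonoOn {α β : Type*} [LinearOrder α] [LinearOrder β] {s : Finset α}
    {t : Finset β} (hst : #t = #s) {f g : α → β} (hf : StrictMonoOn f s) (hg : StrictMonoOn g s)
    (hfs : Set.MapsTo f s t) (hgs : Set.MapsTo g s t) : Set.EqOn f g s := by
  have key : ∀ {f : α → β}, StrictMonoOn f s → Set.MapsTo f s t →
      ∀ i, f (s.orderEmbOfFin rfl i) = t.orderEmbOfFin hst i := fun hf hfs i =>
    congrFun (orderEmbOfFin_unique hst (fun i => hfs (s.orderEmbOfFin_mem rfl i))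
      fun i j hij => hf (s.orderEmbOfFin_mem rfl i) (s.orderEmbOfFin_mem rfl j)
        ((s.orderEmbOfFin rfl).strictMono hij)) i
  intro x hx
  obtain ⟨i, rfl⟩ : x ∈ Set.range (s.orderEmbOfFin rfl) := by rwa [range_orderEmbOfFin]
  rw [key hf hfs, key hg hgs]

lemma Finset.card_filter_le_lt_of_orderIso {α : Type*} [LinearOrder α] {s t : Finset α}
    (ρ : s ≃o t) {a k : α} (ha : a ∈ s) (hak : a ≤ k) (hk : k < ρ ⟨a, ha⟩) :
    #(t.filter (· ≤ k)) < #(s.filter (· ≤ k)) := by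
  -- `ρ⁻¹` sends the elements of `t` up to `k` below `a`
  calc #(t.filter (· ≤ k)) ≤ #(s.filter (· < a)) := by
        refine card_le_card_of_injOn (fun b => if hb : b ∈ t then (ρ.symm ⟨b, hb⟩ : α) else b)
          (fun b hb => ?_) (fun b hb b' hb' h => ?_)
        · simp only [coe_filter, Set.mem_ofPred_eq] at hb ⊢
          rw [dif_pos hb.1]
          exact ⟨(ρ.symm _).2, Subtype.coe_lt_coe.mpr
            (ρ.symm_apply_lt (x := ⟨a, ha⟩).mpr (hb.2.trans_lt hk))⟩
        · simp only [coe_filter, Set.mem_ofPred_eq] at hb hb'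
          simp only [dif_pos hb.1, dif_pos hb'.1] at h
          simpa using ρ.symm.injective (Subtype.ext h)
    _ < #(s.filter (· ≤ k)) := by
        refine card_lt_card ((ssubset_iff_of_subset fun x hx => ?_).mpr ⟨a, ?_, ?_⟩)
        · simp only [mem_filter] at hx ⊢
          exact ⟨hx.1, hx.2.le.trans hak⟩
        · simp [ha, hak]
        · simp

lemma avoids321_of_strictMonoOn {n : ℕ} {w : Equiv.Perm ℕ} (s : Set ℕ) (hs : StrictMonoOn w s)
    (hsc : StrictMonoOn w sᶜ) : Avoids321 n w := by
  have key : ∀ x y, x < y → w y < w x → ¬ ((x ∈ s ∧ y ∈ s) ∨ (x ∉ s ∧ y ∉ s)) := by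
    rintro x y hxy hw (⟨hx, hy⟩ | ⟨hx, hy⟩)
    · exact (hs hx hy hxy).not_gt hw
    · exact (hsc hx hy hxy).not_gt hw
  rintro p q r - hpq hqr - ⟨h1, h2⟩
  have := key p q hpq h1
  have := key q r hqr h2
  have := key p r (hpq.trans hqr) (h2.trans h1)
  -- two of `p`, `q`, `r` lie on the same side of `s`
  tauto

section ArcMatching

variable {s t : Finset ℕ} (ρ : s ≃ t)

def arcMatching (k : ℕ) : ℕ :=
  if hk : k ∈ s then ρ ⟨k, hk⟩ else if hk : k ∈ t then ρ.symm ⟨k, hk⟩ else k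

lemma arcMatching_of_mem_left {k : ℕ} (hk : k ∈ s) : arcMatching ρ k = ρ ⟨k, hk⟩ := dif_pos hk

lemma arcMatching_of_mem_right (hst : Disjoint s t) {k : ℕ} (hk : k ∈ t) :
    arcMatching ρ k = ρ.symm ⟨k, hk⟩ := by
  rw [arcMatching, dif_neg (disjoint_right.mp hst hk), dif_pos hk]

lemma arcMatching_of_notMem {k : ℕ} (hs : k ∉ s) (ht : k ∉ t) : arcMatching ρ k = k := by
  rw [arcMatching, dif_neg hs, dif_neg ht]

lemma arcMatching_involutive (hst : Disjoint s t) : Function.Involutive (arcMatching ρ) := by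
  intro k
  by_cases hs : k ∈ s
  · rw [arcMatching_of_mem_left ρ hs, arcMatching_of_mem_right ρ hst (ρ _).2]
    simp
  by_cases ht : k ∈ t
  · rw [arcMatching_of_mem_right ρ hst ht, arcMatching_of_mem_left ρ (ρ.symm _).2]
    simp
  rw [arcMatching_of_notMem ρ hs ht, arcMatching_of_notMem ρ hs ht]

end ArcMatching

/-! ### Dyck words as lattice paths -/

namespace DyckStep

def toInt : DyckStep → ℤ
  | U => 1
  | D => -1

def ofInt (x : ℤ) : DyckStep := if x = 1 then U else D

lemma toInt_ofInt {x : ℤ} (hx : x = 1 ∨ x = -1) : (ofInt x).toInt = x := by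
  rcases hx with rfl | rfl <;> rfl

lemma sum_map_toInt (s : List DyckStep) :
    (s.map toInt).sum = (s.count U : ℤ) - s.count D := by
  induction s with
  | nil => simp
  | cons a s ih => cases a <;> simp [ih, toInt] <;> ring

lemma map_toInt_map_ofInt {l : List ℤ} (hl : ∀ x ∈ l, x = 1 ∨ x = -1) :
    (l.map ofInt).map toInt = l := by
  rw [List.map_map]
  conv_rhs => rw [← List.map_id l]
  exact List.map_congr_left fun x hx => toInt_ofInt (hl x hx)

end DyckStep

namespace DyckWord

open DyckStep

def toPath (d : DyckWord) : List ℤ := d.toList.map toInt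

lemma sum_take_toPath (d : DyckWord) (k : ℕ) :
    (d.toPath.take k).sum = ((d.toList.take k).count U : ℤ) - (d.toList.take k).count D := by
  rw [toPath, ← List.map_take, sum_map_toInt]

lemma sum_take_toPath_nonneg (d : DyckWord) (k : ℕ) : 0 ≤ (d.toPath.take k).sum := by
  rw [sum_take_toPath, sub_nonneg]
  exact_mod_cast d.count_D_le_count_U k

lemma sum_toPath (d : DyckWord) : d.toPath.sum = 0 := by
  rw [toPath, sum_map_toInt, d.count_U_eq_count_D, sub_self]

lemma mem_toPath {d : DyckWord} {x : ℤ} (hx : x ∈ d.toPath) : x = 1 ∨ x = -1 := by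
  obtain ⟨s, -, rfl⟩ := List.mem_map.mp hx
  cases s
  exacts [Or.inl rfl, Or.inr rfl]

lemma length_toPath (d : DyckWord) : d.toPath.length = 2 * d.semilength := by
  simp [toPath]

lemma toPath_injective : Function.Injective toPath := by
  intro d e h
  ext1
  refine List.map_injective_iff.mpr ?_ h
  rintro (_ | _) (_ | _) h <;> first | rfl | cases h

lemma IsNested.sum_take_toPath_pos {d : DyckWord} (hd : d.IsNested) {k : ℕ} (hk : 0 < k)
    (hkd : k < d.toPath.length) : 0 < (d.toPath.take k).sum := by
  rw [sum_take_toPath, sub_pos]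
  exact_mod_cast hd.2 hk (by simpa [toPath] using hkd)

lemma toPath_nest (d : DyckWord) : d.nest.toPath = 1 :: (d.toPath ++ [-1]) := by
  simp [toPath, nest, toInt]

def ofPath (l : List ℤ) (hl : ∀ x ∈ l, x = 1 ∨ x = -1) (hnonneg : ∀ k, 0 ≤ (l.take k).sum)
    (hsum : l.sum = 0) : DyckWord where
  toList := l.map ofInt
  count_U_eq_count_D := by
    have h := sum_map_toInt (l.map ofInt)
    rw [map_toInt_map_ofInt hl, hsum] at h
    omega
  count_D_le_count_U k := by
    have h := sum_map_toInt ((l.take k).map ofInt)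
    rw [map_toInt_map_ofInt fun x hx => hl x (List.mem_of_mem_take hx)] at h
    rw [← List.map_take]
    have := hnonneg k
    omega

lemma toPath_ofPath {l : List ℤ} (hl : ∀ x ∈ l, x = 1 ∨ x = -1) (hnonneg : ∀ k, 0 ≤ (l.take k).sum)
    (hsum : l.sum = 0) : (ofPath l hl hnonneg hsum).toPath = l :=
  map_toInt_map_ofInt hl

lemma isNested_ofPath {l : List ℤ} (hl : ∀ x ∈ l, x = 1 ∨ x = -1)
    (hnonneg : ∀ k, 0 ≤ (l.take k).sum) (hsum : l.sum = 0) (hne : l ≠ [])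
    (hpos : ∀ k, 0 < k → k < l.length → 0 < (l.take k).sum) :
    (ofPath l hl hnonneg hsum).IsNested := by
  refine ⟨fun h => hne ?_, fun k hk hkl => ?_⟩
  · simpa [ofPath] using toList_eq_nil.mpr h
  · have h := sum_take_toPath (ofPath l hl hnonneg hsum) k
    rw [toPath_ofPath] at h
    have := hpos k hk (by simpa [ofPath] using hkl)
    omega

end DyckWord

/-! ### Motzkin paths with all flat steps on the axis -/

structure IsAxisMotzkin (l : List ℤ) : Prop where
  mem : ∀ x ∈ l, x = 1 ∨ x = 0 ∨ x = -1
  sum_take_nonneg : ∀ k, 0 ≤ (l.take k).sum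
  sum_eq_zero : l.sum = 0
  sum_take_eq_zero : ∀ k, l[k]? = some 0 → (l.take k).sum = 0

namespace IsAxisMotzkin

variable {l v : List ℤ}

lemma drop (hl : IsAxisMotzkin l) {j : ℕ} (hj : (l.take j).sum = 0) :
    IsAxisMotzkin (l.drop j) where
  mem x hx := hl.mem x (List.mem_of_mem_drop hx)
  sum_take_nonneg k := by
    rw [List.sum_take_drop, hj, sub_zero]
    exact hl.sum_take_nonneg _
  sum_eq_zero := by
    have := congrArg List.sum (List.take_append_drop j l)
    rw [List.sum_append, hj, hl.sum_eq_zero] at this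
    omega
  sum_take_eq_zero k hk := by
    rw [List.sum_take_drop, hj, hl.sum_take_eq_zero _ (by rwa [← List.getElem?_drop])]
    rfl

lemma cons_zero (hv : IsAxisMotzkin v) : IsAxisMotzkin (0 :: v) where
  mem x hx := by
    rcases List.mem_cons.mp hx with rfl | hx
    exacts [Or.inr (Or.inl rfl), hv.mem x hx]
  sum_take_nonneg
    | 0 => le_rfl
    | k + 1 => by simpa using hv.sum_take_nonneg k
  sum_eq_zero := by simpa using hv.sum_eq_zero
  sum_take_eq_zero
    | 0, _ => rfl
    | k + 1, hk => by simpa using hv.sum_take_eq_zero k hk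

lemma toPath_append (d : DyckWord) (hv : IsAxisMotzkin v) : IsAxisMotzkin (d.toPath ++ v) where
  mem x hx := by
    rcases List.mem_append.mp hx with hx | hx
    · rcases d.mem_toPath hx with h | h
      exacts [Or.inl h, Or.inr (Or.inr h)]
    · exact hv.mem x hx
  sum_take_nonneg k := by
    rw [List.sum_take_append]
    exact add_nonneg (d.sum_take_toPath_nonneg k) (hv.sum_take_nonneg _)
  sum_eq_zero := by rw [List.sum_append, d.sum_toPath, hv.sum_eq_zero, add_zero]
  sum_take_eq_zero k hk := by
    rcases lt_or_ge k d.toPath.length with hkd | hkd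
    · rw [List.getElem?_append_left hkd] at hk
      rcases d.mem_toPath (List.mem_of_getElem? hk) with h | h <;> simp at h
    · rw [List.getElem?_append_right hkd] at hk
      rw [List.sum_take_append, List.take_of_length_le hkd, d.sum_toPath,
        hv.sum_take_eq_zero _ hk, add_zero]

lemma exists_nest_toPath_eq_take (hl : IsAxisMotzkin l) {j : ℕ} (hj0 : 0 < j)
    (hjl : j ≤ l.length) (hj : (l.take j).sum = 0)
    (hmin : ∀ t, 0 < t → t < j → (l.take t).sum ≠ 0) (h0 : l[0]? ≠ some 0) :
    ∃ d : DyckWord, d.nest.toPath = l.take j := by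
  have hlen : (l.take j).length = j := by simp [hjl]
  have hpm : ∀ x ∈ l.take j, x = 1 ∨ x = -1 := by
    intro x hx
    obtain ⟨t, ht⟩ := List.mem_iff_getElem?.mp hx
    rw [List.getElem?_take] at ht
    split_ifs at ht with htj
    rcases hl.mem x (List.mem_of_getElem? ht) with h | rfl | h
    · exact Or.inl h
    · rcases Nat.eq_zero_or_pos t with rfl | ht0
      · exact absurd ht h0
      · exact absurd (hl.sum_take_eq_zero t ht) (hmin t ht0 htj)
    · exact Or.inr h
  have hnonneg : ∀ k, 0 ≤ ((l.take j).take k).sum := fun k => by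
    rw [List.take_take]
    exact hl.sum_take_nonneg _
  have hpos : ∀ k, 0 < k → k < (l.take j).length → 0 < ((l.take j).take k).sum := by
    intro k hk hkj
    rw [List.take_take, min_eq_left (by omega)]
    exact lt_of_le_of_ne (hl.sum_take_nonneg k) (hmin k hk (by omega)).symm
  have hne : l.take j ≠ [] := List.length_pos_iff.mp (by omega)
  have hn := DyckWord.isNested_ofPath hpm hnonneg hj hne hpos
  exact ⟨_, by rw [DyckWord.nest_denest _ hn, DyckWord.toPath_ofPath]⟩

/-- Cut at the first return to the axis. -/
lemma exists_nest_append (hl : IsAxisMotzkin l) (hne : l ≠ []) (h0 : l[0]? ≠ some 0) :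
    ∃ (d : DyckWord) (v : List ℤ), IsAxisMotzkin v ∧ l = d.nest.toPath ++ v := by
  have hreturn : 0 < l.length ∧ (l.take l.length).sum = 0 :=
    ⟨List.length_pos_iff.mpr hne, by rw [List.take_length, hl.sum_eq_zero]⟩
  have hex : ∃ k, 0 < k ∧ (l.take k).sum = 0 := ⟨_, hreturn⟩
  obtain ⟨hj0, hj⟩ := Nat.find_spec hex
  obtain ⟨d, hd⟩ := hl.exists_nest_toPath_eq_take hj0 (Nat.find_min' hex hreturn) hj
    (fun t ht htj h => Nat.find_min hex htj ⟨ht, h⟩) h0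
  exact ⟨d, _, hl.drop hj, by rw [hd, List.take_append_drop]⟩

end IsAxisMotzkin

lemma DyckWord.nest_toPath_append_inj {d e : DyckWord} {v w : List ℤ}
    (h : d.nest.toPath ++ v = e.nest.toPath ++ w) : d = e ∧ v = w := by
  have key : ∀ {d e : DyckWord} {v w : List ℤ}, d.nest.toPath ++ v = e.nest.toPath ++ w →
      d.nest.toPath.length ≥ e.nest.toPath.length := by
    intro d e v w h
    by_contra! hlt
    have hpos := IsNested.nest.sum_take_toPath_pos (by simp [length_toPath]) hlt
    have hsum := congrArg (fun l => (l.take d.nest.toPath.length).sum) h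
    simp only [List.sum_take_append, List.take_length, Nat.sub_self,
      Nat.sub_eq_zero_of_le hlt.le, List.take_zero, List.sum_nil, add_zero, sum_toPath] at hsum
    omega
  obtain ⟨h1, h2⟩ := List.append_inj h (le_antisymm (key h.symm) (key h))
  refine ⟨?_, h2⟩
  rw [← d.insidePart_nest, ← e.insidePart_nest, toPath_injective h1]

def ternaryPaths : ℕ → Finset (List ℤ)
  | 0 => {[]}
  | n + 1 => (({1, 0, -1} : Finset ℤ) ×ˢ ternaryPaths n).image fun q => q.1 :: q.2

lemma mem_ternaryPaths {n : ℕ} {l : List ℤ} :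
    l ∈ ternaryPaths n ↔ l.length = n ∧ ∀ x ∈ l, x = 1 ∨ x = 0 ∨ x = -1 := by
  induction n generalizing l with
  | zero => simp only [ternaryPaths, mem_singleton, List.length_eq_zero_iff]; aesop
  | succ n ih => cases l <;> simp [ternaryPaths, ih, and_left_comm]

section

open scoped Classical

noncomputable def axisMotzkinPaths (n : ℕ) : Finset (List ℤ) :=
  (ternaryPaths n).filter IsAxisMotzkin

lemma mem_axisMotzkinPaths {n : ℕ} {l : List ℤ} :
    l ∈ axisMotzkinPaths n ↔ l.length = n ∧ IsAxisMotzkin l := by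
  rw [axisMotzkinPaths, mem_filter, mem_ternaryPaths]
  exact ⟨fun h => ⟨h.1.1, h.2⟩, fun h => ⟨⟨h.1, h.2.mem⟩, h.2⟩⟩

lemma axisMotzkinPaths_succ (n : ℕ) : axisMotzkinPaths (n + 1) =
    (axisMotzkinPaths n).image (List.cons 0) ∪ (Icc 1 ((n + 1) / 2)).biUnion fun i =>
      (univ ×ˢ axisMotzkinPaths (n + 1 - 2 * i)).image
        fun q : {d : DyckWord // d.semilength = i - 1} × List ℤ => q.1.1.nest.toPath ++ q.2 := by
  ext l
  simp only [mem_union, mem_image, mem_biUnion, mem_Icc, mem_product, mem_univ, true_and,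
    mem_axisMotzkinPaths, Prod.exists, Subtype.exists]
  constructor
  · rintro ⟨hlen, hl⟩
    cases l with
    | nil => simp at hlen
    | cons x r =>
      by_cases hx : x = 0
      · subst hx
        exact Or.inl ⟨r, ⟨by simpa using hlen, by simpa using hl.drop (j := 1) rfl⟩, rfl⟩
      · obtain ⟨d, v, hv, hdv⟩ := hl.exists_nest_append (by simp) (by simpa using hx)
        have hlen' := congrArg List.length hdv
        simp only [List.length_append, DyckWord.length_toPath, DyckWord.semilength_nest,
          hlen] at hlen'
        exact Or.inr ⟨d.semilength + 1, by omega, d, by simp, v, ⟨by omega, hv⟩, hdv.symm⟩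
  · rintro (⟨v, ⟨hlen, hv⟩, rfl⟩ | ⟨i, hi, d, hd, v, ⟨hlen, hv⟩, rfl⟩)
    · exact ⟨by simp [hlen], hv.cons_zero⟩
    · refine ⟨?_, hv.toPath_append d.nest⟩
      simp only [List.length_append, DyckWord.length_toPath, DyckWord.semilength_nest, hlen]
      omega

lemma card_axisMotzkinPaths_succ (n : ℕ) : #(axisMotzkinPaths (n + 1)) = #(axisMotzkinPaths n) +
    ∑ i ∈ Icc 1 ((n + 1) / 2), catalan (i - 1) * #(axisMotzkinPaths (n + 1 - 2 * i)) := by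
  rw [axisMotzkinPaths_succ, card_union_of_disjoint, card_image_of_injective _ List.cons_injective,
    card_biUnion]
  · refine congrArg _ (sum_congr rfl fun i _ => ?_)
    rw [card_image_of_injective, card_product, card_univ,
      DyckWord.card_dyckWord_semilength_eq_catalan]
    rintro ⟨⟨d, hd⟩, v⟩ ⟨⟨e, he⟩, w⟩ h
    obtain ⟨rfl, rfl⟩ := DyckWord.nest_toPath_append_inj h
    rfl
  · intro i hi i' hi' hii'
    refine disjoint_left.mpr fun l hl hl' => hii' ?_
    obtain ⟨⟨⟨d, hd⟩, v⟩, -, rfl⟩ := mem_image.mp hl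
    obtain ⟨⟨⟨e, he⟩, w⟩, -, h⟩ := mem_image.mp hl'
    obtain ⟨rfl, -⟩ := DyckWord.nest_toPath_append_inj h
    simp only [coe_Icc, Set.mem_Icc] at hi hi'
    dsimp only at hd
    omega
  · refine disjoint_left.mpr fun l hl hl' => ?_
    obtain ⟨v, -, rfl⟩ := mem_image.mp hl
    obtain ⟨i, -, hl'⟩ := mem_biUnion.mp hl'
    obtain ⟨⟨⟨d, _⟩, w⟩, -, h⟩ := mem_image.mp hl'
    simp [DyckWord.toPath_nest] at h

end

/-! ### The path of an involution -/

namespace Equiv.Perm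

variable (w : Perm ℕ)

def arcStep (j : ℕ) : ℤ := if j < w j then 1 else if w j < j then -1 else 0

def arcPath (n : ℕ) : List ℤ := (List.range n).map fun k => w.arcStep (k + 1)

variable {w}

lemma arcStep_eq_one_iff {j : ℕ} : w.arcStep j = 1 ↔ j < w j := by
  unfold arcStep; split_ifs <;> simp <;> omega

lemma arcStep_eq_neg_one_iff {j : ℕ} : w.arcStep j = -1 ↔ w j < j := by
  unfold arcStep; split_ifs <;> simp <;> omega

lemma arcStep_eq_zero_iff {j : ℕ} : w.arcStep j = 0 ↔ w j = j := by
  unfold arcStep; split_ifs <;> simp <;> omega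

lemma getElem?_arcPath {n k : ℕ} (hk : k < n) : (w.arcPath n)[k]? = some (w.arcStep (k + 1)) := by
  simp [arcPath, List.getElem?_range hk]

lemma getD_arcPath {n j : ℕ} (hj : 1 ≤ j) (hjn : j ≤ n) :
    (w.arcPath n).getD (j - 1) 0 = w.arcStep j := by
  rw [List.getD_eq_getElem?_getD, getElem?_arcPath (by omega), Nat.sub_add_cancel hj,
    Option.getD_some]

lemma mem_arcPath {n : ℕ} {x : ℤ} (hx : x ∈ w.arcPath n) : x = 1 ∨ x = 0 ∨ x = -1 := by
  obtain ⟨k, -, rfl⟩ := List.mem_map.mp hx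
  unfold arcStep; split_ifs <;> simp

lemma sum_take_arcPath {n k : ℕ} (hk : k ≤ n) :
    ((w.arcPath n).take k).sum =
      #((Icc 1 k).filter fun j => j < w j) - #((Icc 1 k).filter fun j => w j < j) := by
  rw [List.sum_take_eq_card_sub_card (fun x => mem_arcPath) (by simpa [arcPath])]
  congr 3 <;> refine filter_congr fun j hj => ?_ <;> rw [mem_Icc] at hj <;>
    rw [getD_arcPath hj.1 (hj.2.trans hk)]
  exacts [arcStep_eq_one_iff, arcStep_eq_neg_one_iff]

end Equiv.Perm

namespace IsInvolutionOn

variable {n : ℕ} {w : Equiv.Perm ℕ}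

lemma involutive (hw : IsInvolutionOn n w) : Function.Involutive w := fun k => by
  simpa using congrArg (· k) hw.2

lemma apply_eq_self (hw : IsInvolutionOn n w) {k : ℕ} (hk : k ∉ Icc 1 n) : w k = k := by
  by_contra h
  exact hk (mem_Icc.mpr (hw.1 k h))

lemma mem_Icc_of_lt (hw : IsInvolutionOn n w) {a : ℕ} (ha : a < w a) :
    a ∈ Icc 1 n ∧ w a ∈ Icc 1 n := by
  have h1 := hw.1 a ha.ne'
  have h2 := hw.1 (w a) (by rw [hw.involutive _]; exact ha.ne)
  exact ⟨mem_Icc.mpr h1, mem_Icc.mpr h2⟩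

/-- `w` sends the closers among `1, …, k` injectively to openers among `1, …, k`. -/
lemma card_closers_le_card_openers (hw : IsInvolutionOn n w) (k : ℕ) :
    #((Icc 1 k).filter fun j => w j < j) ≤ #((Icc 1 k).filter fun j => j < w j) := by
  refine card_le_card_of_injOn w (fun j hj => ?_) w.injective.injOn
  simp only [coe_filter, Set.mem_ofPred_eq, mem_Icc] at hj ⊢
  have hwj : w j < w (w j) := by rw [hw.involutive _]; exact hj.2
  exact ⟨⟨(mem_Icc.mp (hw.mem_Icc_of_lt hwj).1).1, by omega⟩, hwj⟩

lemma card_openers_le_card_closers (hw : IsInvolutionOn n w) {k : ℕ}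
    (hk : ∀ a ∈ Icc 1 k, a < w a → w a ≤ k) :
    #((Icc 1 k).filter fun j => j < w j) ≤ #((Icc 1 k).filter fun j => w j < j) := by
  refine card_le_card_of_injOn w (fun a ha => ?_) w.injective.injOn
  simp only [coe_filter, Set.mem_ofPred_eq] at ha ⊢
  rw [mem_Icc] at ha ⊢
  rw [hw.involutive _]
  exact ⟨⟨by omega, hk a (mem_Icc.mpr ha.1) ha.2⟩, ha.2⟩

lemma card_closers_eq_card_openers (hw : IsInvolutionOn n w) :
    #((Icc 1 n).filter fun j => w j < j) = #((Icc 1 n).filter fun j => j < w j) :=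
  (hw.card_closers_le_card_openers n).antisymm
    (hw.card_openers_le_card_closers fun _ _ ha => (mem_Icc.mp (hw.mem_Icc_of_lt ha).2).2)

lemma mapsTo_openers (hw : IsInvolutionOn n w) :
    Set.MapsTo w ((Icc 1 n).filter fun j => j < w j) ((Icc 1 n).filter fun j => w j < j) := by
  intro a ha
  simp only [coe_filter, Set.mem_ofPred_eq] at ha ⊢
  exact ⟨(hw.mem_Icc_of_lt ha.2).2, by rw [hw.involutive _]; exact ha.2⟩

end IsInvolutionOn

namespace Avoids321

variable {n : ℕ} {w : Equiv.Perm ℕ}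

lemma apply_lt_apply (h : Avoids321 n w) (hw : IsInvolutionOn n w) {a b : ℕ} (hab : a < b)
    (ha : a < w a) (hb : b < w b) : w a < w b := by
  by_contra! hle
  have hne : w b ≠ w a := fun h => hab.ne (w.injective h).symm
  exact h a b (w b) (mem_Icc.mp (hw.mem_Icc_of_lt ha).1).1 hab hb
    (mem_Icc.mp (hw.mem_Icc_of_lt hb).2).2 ⟨lt_of_le_of_ne hle hne, by rwa [hw.involutive _]⟩

lemma strictMonoOn_openers (h : Avoids321 n w) (hw : IsInvolutionOn n w) :
    StrictMonoOn w ((Icc 1 n).filter fun j => j < w j : Finset ℕ) := fun _ ha _ hb hab =>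
  h.apply_lt_apply hw hab (mem_filter.mp ha).2 (mem_filter.mp hb).2

lemma apply_lt_of_fixed (h : Avoids321 n w) (hw : IsInvolutionOn n w) {a f : ℕ} (hf : w f = f)
    (haf : a < f) (ha : a < w a) : w a < f := by
  by_contra! hle
  have hne : w a ≠ f := fun h' => haf.ne (w.injective (h'.trans hf.symm))
  exact h a f (w a) (mem_Icc.mp (hw.mem_Icc_of_lt ha).1).1 haf (lt_of_le_of_ne hle hne.symm)
    (mem_Icc.mp (hw.mem_Icc_of_lt ha).2).2
    ⟨by rw [hf]; omega, by rw [hw.involutive _, hf]; exact haf⟩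

end Avoids321

lemma isAxisMotzkin_arcPath {n : ℕ} {w : Equiv.Perm ℕ} (hw : IsInvolutionOn n w)
    (h321 : Avoids321 n w) : IsAxisMotzkin (w.arcPath n) := by
  have hlen : (w.arcPath n).length = n := by simp [Equiv.Perm.arcPath]
  have hsum : (w.arcPath n).sum = 0 := by
    rw [← List.take_of_length_le hlen.le, Equiv.Perm.sum_take_arcPath le_rfl,
      hw.card_closers_eq_card_openers, sub_self]
  refine ⟨fun x => Equiv.Perm.mem_arcPath, fun k => ?_, hsum, fun k hk => ?_⟩
  · rcases le_or_gt k n with hk | hk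
    · rw [Equiv.Perm.sum_take_arcPath hk]
      have := hw.card_closers_le_card_openers k
      omega
    · rw [List.take_of_length_le (by omega), hsum]
  · have hkn : k < n := by
      by_contra! hkn
      rw [List.getElem?_eq_none (by omega)] at hk
      cases hk
    rw [Equiv.Perm.getElem?_arcPath hkn, Option.some_inj,
      Equiv.Perm.arcStep_eq_zero_iff] at hk
    rw [Equiv.Perm.sum_take_arcPath hkn.le]
    have := hw.card_closers_le_card_openers k
    have := hw.card_openers_le_card_closers fun a ha hwa =>
      Nat.le_of_lt_succ (h321.apply_lt_of_fixed hw hk (by rw [mem_Icc] at ha; omega) hwa)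
    omega

lemma Equiv.Perm.eq_of_arcStep_eq {w v : Equiv.Perm ℕ} (hw : Function.Involutive w)
    (hv : Function.Involutive v) (hstep : ∀ j, w.arcStep j = v.arcStep j)
    (hopen : ∀ a, a < w a → w a = v a) : w = v := by
  ext k
  rcases lt_trichotomy k (w k) with h | h | h
  · exact hopen k h
  · have := hstep k
    rw [arcStep_eq_zero_iff.mpr h.symm, eq_comm, arcStep_eq_zero_iff] at this
    rw [this, ← h]
  · have hk := hopen (w k) (by rwa [hw k])
    rw [hw k] at hk
    calc w k = v (v (w k)) := (hv _).symm
      _ = v k := by rw [← hk]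

lemma arcPath_injOn (n : ℕ) :
    Set.InjOn (·.arcPath n) {w : Equiv.Perm ℕ | IsInvolutionOn n w ∧ Avoids321 n w} := by
  rintro w ⟨hw, hw321⟩ v ⟨hv, hv321⟩ (h : w.arcPath n = v.arcPath n)
  have hstep : ∀ j, w.arcStep j = v.arcStep j := by
    intro j
    by_cases hj : j ∈ Icc 1 n
    · rw [mem_Icc] at hj
      rw [← Equiv.Perm.getD_arcPath hj.1 hj.2, h, Equiv.Perm.getD_arcPath hj.1 hj.2]
    · rw [Equiv.Perm.arcStep_eq_zero_iff.mpr (hw.apply_eq_self hj),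
        Equiv.Perm.arcStep_eq_zero_iff.mpr (hv.apply_eq_self hj)]
  have hO : ((Icc 1 n).filter fun j => j < v j) = (Icc 1 n).filter fun j => j < w j :=
    filter_congr fun j _ => by
      rw [← Equiv.Perm.arcStep_eq_one_iff, ← Equiv.Perm.arcStep_eq_one_iff, hstep]
  have hC : ((Icc 1 n).filter fun j => v j < j) = (Icc 1 n).filter fun j => w j < j :=
    filter_congr fun j _ => by
      rw [← Equiv.Perm.arcStep_eq_neg_one_iff, ← Equiv.Perm.arcStep_eq_neg_one_iff, hstep]
  have hv321' := hv321.strictMonoOn_openers hv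
  have hvmaps := hv.mapsTo_openers
  rw [hO, hC] at hvmaps
  rw [hO] at hv321'
  have heq := Finset.eqOn_of_strictMonoOn hw.card_closers_eq_card_openers
    (hw321.strictMonoOn_openers hw) hv321' hw.mapsTo_openers hvmaps
  refine Equiv.Perm.eq_of_arcStep_eq hw.involutive hv.involutive hstep fun a ha => heq ?_
  exact mem_filter.mpr ⟨(hw.mem_Icc_of_lt ha).1, ha⟩

/-! ### The involution of a path -/

namespace List

def upSteps (l : List ℤ) : Finset ℕ := (Icc 1 l.length).filter fun j => l.getD (j - 1) 0 = 1

def downSteps (l : List ℤ) : Finset ℕ := (Icc 1 l.length).filter fun j => l.getD (j - 1) 0 = -1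

lemma disjoint_upSteps_downSteps (l : List ℤ) : _root_.Disjoint l.upSteps l.downSteps := by
  refine Finset.disjoint_left.mpr fun j hu hd => ?_
  have := (Finset.mem_filter.mp hu).2
  have := (Finset.mem_filter.mp hd).2
  omega

end List

namespace IsAxisMotzkin

variable {l : List ℤ}

lemma sum_take_eq_card_upSteps_sub_card_downSteps (hl : IsAxisMotzkin l) {k : ℕ}
    (hk : k ≤ l.length) :
    (l.take k).sum = #(l.upSteps.filter (· ≤ k)) - #(l.downSteps.filter (· ≤ k)) := by
  rw [List.sum_take_eq_card_sub_card hl.mem hk, List.upSteps, List.downSteps, filter_filter,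
    filter_filter]
  congr 3 <;> ext j <;> simp only [mem_filter, mem_Icc] <;> omega

lemma card_upSteps (hl : IsAxisMotzkin l) : #l.upSteps = #l.downSteps := by
  have h := hl.sum_take_eq_card_upSteps_sub_card_downSteps le_rfl
  rw [List.take_length, hl.sum_eq_zero] at h
  rw [filter_true_of_mem (s := l.upSteps) fun j hj => (mem_Icc.mp (mem_filter.mp hj).1).2,
    filter_true_of_mem (s := l.downSteps) fun j hj => (mem_Icc.mp (mem_filter.mp hj).1).2] at h
  omega

def arcIso (hl : IsAxisMotzkin l) : l.upSteps ≃o l.downSteps :=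
  (l.upSteps.orderIsoOfFin rfl).symm.trans (l.downSteps.orderIsoOfFin hl.card_upSteps.symm)

-- Otherwise the path would be below the axis right after the step `arcIso a`.
lemma lt_arcIso (hl : IsAxisMotzkin l) {a : ℕ} (ha : a ∈ l.upSteps) : a < hl.arcIso ⟨a, ha⟩ := by
  set c := hl.arcIso ⟨a, ha⟩
  have hne : (c : ℕ) ≠ a := fun h =>
    disjoint_left.mp l.disjoint_upSteps_downSteps ha (h ▸ c.2)
  by_contra! hle
  have hcount := card_filter_le_lt_of_orderIso hl.arcIso.symm c.2 le_rfl
    (by simpa [c] using lt_of_le_of_ne hle hne)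
  have hcn : (c : ℕ) ≤ l.length := (mem_Icc.mp (mem_filter.mp c.2).1).2
  have := hl.sum_take_nonneg c
  rw [hl.sum_take_eq_card_upSteps_sub_card_downSteps hcn] at this
  omega

-- Otherwise the path would be strictly above the axis just before the flat step `x`.
lemma arcIso_lt_of_flat (hl : IsAxisMotzkin l) {a x : ℕ} (ha : a ∈ l.upSteps)
    (hxu : x ∉ l.upSteps) (hxd : x ∉ l.downSteps) (hax : a < x) : hl.arcIso ⟨a, ha⟩ < x := by
  have hne : (hl.arcIso ⟨a, ha⟩ : ℕ) ≠ x := fun h => hxd (h ▸ (hl.arcIso ⟨a, ha⟩).2)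
  have hcn : (hl.arcIso ⟨a, ha⟩ : ℕ) ≤ l.length :=
    (mem_Icc.mp (mem_filter.mp (hl.arcIso ⟨a, ha⟩).2).1).2
  by_contra! hle
  have hcount := card_filter_le_lt_of_orderIso hl.arcIso ha (k := x - 1) (by omega)
    (by have := lt_of_le_of_ne hle hne.symm; omega)
  have hxn : x - 1 < l.length := by omega
  have hflat : l[x - 1]? = some 0 := by
    rw [List.getElem?_eq_getElem hxn, Option.some_inj]
    have hx : x ∈ Icc 1 l.length := mem_Icc.mpr ⟨by omega, by omega⟩
    have h1 : ¬ l.getD (x - 1) 0 = 1 := fun h => hxu (mem_filter.mpr ⟨hx, h⟩)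
    have h2 : ¬ l.getD (x - 1) 0 = -1 := fun h => hxd (mem_filter.mpr ⟨hx, h⟩)
    rw [List.getD_eq_getElem _ _ hxn] at h1 h2
    rcases hl.mem _ (List.getElem_mem hxn) with h | h | h <;> tauto
  have := hl.sum_take_eq_zero _ hflat
  rw [hl.sum_take_eq_card_upSteps_sub_card_downSteps hxn.le] at this
  omega

def toPerm (hl : IsAxisMotzkin l) : Equiv.Perm ℕ :=
  (arcMatching_involutive hl.arcIso.toEquiv l.disjoint_upSteps_downSteps).toPerm _

lemma isInvolutionOn_toPerm (hl : IsAxisMotzkin l) : IsInvolutionOn l.length hl.toPerm := by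
  refine ⟨fun k hk => ?_, Equiv.ext fun k =>
    arcMatching_involutive hl.arcIso.toEquiv l.disjoint_upSteps_downSteps k⟩
  by_cases hu : k ∈ l.upSteps
  · exact mem_Icc.mp (mem_filter.mp hu).1
  by_cases hd : k ∈ l.downSteps
  · exact mem_Icc.mp (mem_filter.mp hd).1
  exact absurd (arcMatching_of_notMem _ hu hd) hk

lemma toPerm_of_mem_upSteps (hl : IsAxisMotzkin l) {a : ℕ} (ha : a ∈ l.upSteps) :
    hl.toPerm a = hl.arcIso ⟨a, ha⟩ :=
  arcMatching_of_mem_left _ ha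

lemma toPerm_of_mem_downSteps (hl : IsAxisMotzkin l) {c : ℕ} (hc : c ∈ l.downSteps) :
    hl.toPerm c = hl.arcIso.symm ⟨c, hc⟩ :=
  arcMatching_of_mem_right _ l.disjoint_upSteps_downSteps hc

lemma toPerm_of_flat (hl : IsAxisMotzkin l) {x : ℕ} (hxu : x ∉ l.upSteps)
    (hxd : x ∉ l.downSteps) : hl.toPerm x = x :=
  arcMatching_of_notMem _ hxu hxd

lemma symm_arcIso_lt (hl : IsAxisMotzkin l) {c : ℕ} (hc : c ∈ l.downSteps) :
    hl.arcIso.symm ⟨c, hc⟩ < c := by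
  simpa using hl.lt_arcIso (hl.arcIso.symm ⟨c, hc⟩).2

lemma strictMonoOn_toPerm_upSteps (hl : IsAxisMotzkin l) :
    StrictMonoOn hl.toPerm l.upSteps := by
  intro a ha b hb hab
  rw [hl.toPerm_of_mem_upSteps ha, hl.toPerm_of_mem_upSteps hb]
  exact hl.arcIso.strictMono (Subtype.mk_lt_mk.mpr hab)

lemma strictMonoOn_toPerm_compl (hl : IsAxisMotzkin l) :
    StrictMonoOn hl.toPerm (↑l.upSteps)ᶜ := by
  intro x hxu y hyu hxy
  simp only [Set.mem_compl_iff, mem_coe] at hxu hyu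
  by_cases hxd : x ∈ l.downSteps <;> by_cases hyd : y ∈ l.downSteps
  · rw [hl.toPerm_of_mem_downSteps hxd, hl.toPerm_of_mem_downSteps hyd]
    exact hl.arcIso.symm.strictMono (Subtype.mk_lt_mk.mpr hxy)
  · rw [hl.toPerm_of_mem_downSteps hxd, hl.toPerm_of_flat hyu hyd]
    exact (hl.symm_arcIso_lt hxd).trans hxy
  · rw [hl.toPerm_of_flat hxu hxd, hl.toPerm_of_mem_downSteps hyd]
    set a := hl.arcIso.symm ⟨y, hyd⟩
    by_contra! hax
    have hax' : (a : ℕ) < x := lt_of_le_of_ne hax fun h => hxu (h ▸ a.2)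
    have := hl.arcIso_lt_of_flat a.2 hxu hxd hax'
    simp only [Subtype.coe_eta, a, OrderIso.apply_symm_apply] at this
    omega
  · rwa [hl.toPerm_of_flat hxu hxd, hl.toPerm_of_flat hyu hyd]

lemma avoids321_toPerm (hl : IsAxisMotzkin l) : Avoids321 l.length hl.toPerm :=
  avoids321_of_strictMonoOn _ hl.strictMonoOn_toPerm_upSteps hl.strictMonoOn_toPerm_compl

lemma arcPath_toPerm (hl : IsAxisMotzkin l) : hl.toPerm.arcPath l.length = l := by
  refine List.ext_getElem? fun k => ?_
  by_cases hk : k < l.length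
  · rw [Equiv.Perm.getElem?_arcPath hk, List.getElem?_eq_getElem hk, Option.some_inj]
    have hj : k + 1 ∈ Icc 1 l.length := mem_Icc.mpr ⟨by omega, hk⟩
    have hlk : l.getD (k + 1 - 1) 0 = l[k] := List.getD_eq_getElem _ _ hk
    rcases hl.mem _ (List.getElem_mem hk) with h | h | h <;> rw [h]
    · have hu : k + 1 ∈ l.upSteps := mem_filter.mpr ⟨hj, hlk.trans h⟩
      rw [Equiv.Perm.arcStep_eq_one_iff, hl.toPerm_of_mem_upSteps hu]
      exact hl.lt_arcIso hu
    · rw [Equiv.Perm.arcStep_eq_zero_iff, hl.toPerm_of_flat]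
      · exact fun hu => by have := (mem_filter.mp hu).2; omega
      · exact fun hd => by have := (mem_filter.mp hd).2; omega
    · have hd : k + 1 ∈ l.downSteps := mem_filter.mpr ⟨hj, hlk.trans h⟩
      rw [Equiv.Perm.arcStep_eq_neg_one_iff, hl.toPerm_of_mem_downSteps hd]
      exact hl.symm_arcIso_lt hd
  · rw [List.getElem?_eq_none (by simpa [Equiv.Perm.arcPath] using hk),
      List.getElem?_eq_none (by omega)]

end IsAxisMotzkin

lemma mi_eq_card_axisMotzkinPaths (n : ℕ) : mi n = #(axisMotzkinPaths n) := by
  have hbij : Set.BijOn (·.arcPath n) {w | IsInvolutionOn n w ∧ Avoids321 n w}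
      (axisMotzkinPaths n) := by
    refine ⟨fun w hw => ?_, arcPath_injOn n, fun l hmem => ?_⟩
    · exact mem_axisMotzkinPaths.mpr ⟨by simp [Equiv.Perm.arcPath],
        isAxisMotzkin_arcPath hw.1 hw.2⟩
    · obtain ⟨rfl, hl⟩ := mem_axisMotzkinPaths.mp hmem
      exact ⟨hl.toPerm, ⟨hl.isInvolutionOn_toPerm, hl.avoids321_toPerm⟩, hl.arcPath_toPerm⟩
  rw [mi, ← Set.ncard_coe_finset, ← hbij.image_eq, hbij.injOn.ncard_image]

theorem mi_recursion_general (n : ℕ) :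
    mi n = mi (n - 1) + ∑ i ∈ Finset.Icc 1 (n / 2), catalan (i - 1) * mi (n - 2 * i) := by
  simp only [mi_eq_card_axisMotzkinPaths]
  cases n with
  | zero => simp
  | succ n => exact card_axisMotzkinPaths_succ n

/-- The recursion `mi_n = mi_{n-1} + Σ_{i=1}^{⌊n/2⌋} C_{i-1} · mi_{n-2i}` for the numbers
of 321-avoiding involutions, where `C_m` is the `m`-th Catalan number (note that
`mi 0 = 1` holds for the count defined above, since only the identity qualifies). -/
theorem mi_recursion (n : ℕ) (hn : 1 ≤ n) :
    mi n = mi (n - 1) + ∑ i ∈ Finset.Icc 1 (n / 2), catalan (i - 1) * mi (n - 2 * i) :=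
  mi_recursion_general n
end

section
/- For every k ≥ 1, the binomial coefficient identity C(2k−1, k) = Σ_{i=1}^{k} C_{i−1} · C(2k−2i, k−i) holds, where C_m = (1/(m+1))·binom(2m, m) denotes the m-th Catalan number. -/
/-!
With `j = i - 1` and `n = k - 1` the sum is the convolution `∑ catalan i * centralBinom (n - i)`,
while the left side is `choose (2n + 1) n = centralBinom (n + 1) / 2`. Both `centralBinom (n + 1)`
and twice the convolution satisfy `x (n + 1) = 4 x n - 2 catalan (n + 1)`: for the convolution,
expand each `centralBinom (j + 1) = 4 centralBinom j - 2 catalan j` and recognise the Catalan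
recurrence `∑ catalan i * catalan (n - i) = catalan (n + 1)`.
-/

open Finset Nat

theorem Nat.centralBinom_succ_add_two_mul_catalan (n : ℕ) :
    centralBinom (n + 1) + 2 * catalan n = 4 * centralBinom n := by
  apply Nat.eq_of_mul_eq_mul_left n.succ_pos
  have := succ_mul_centralBinom_succ n
  have := succ_mul_catalan_eq_centralBinom n
  grind

theorem Nat.two_mul_choose_two_mul_add_one (n : ℕ) :
    2 * (2 * n + 1).choose n = centralBinom (n + 1) := by
  rw [centralBinom_eq_two_mul_choose, mul_add_one, choose_succ_succ, choose_symm_half]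
  ring

theorem Nat.two_mul_sum_antidiagonal_catalan_mul_centralBinom (n : ℕ) :
    2 * ∑ ij ∈ antidiagonal n, catalan ij.1 * centralBinom ij.2 = centralBinom (n + 1) := by
  induction n with
  | zero => simp [centralBinom]
  | succ n ih =>
    have expand : ∑ ij ∈ antidiagonal n, catalan ij.1 * centralBinom (ij.2 + 1)
        + 2 * catalan (n + 1) = 4 * ∑ ij ∈ antidiagonal n, catalan ij.1 * centralBinom ij.2 := by
      simp only [catalan_succ', mul_sum, ← sum_add_distrib]
      refine sum_congr rfl fun ij _ => ?_
      linear_combination catalan ij.1 * centralBinom_succ_add_two_mul_catalan ij.2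
    have := centralBinom_succ_add_two_mul_catalan (n + 1)
    rw [sum_antidiagonal_succ', centralBinom_zero, mul_one]
    dsimp only
    omega

theorem Nat.sum_antidiagonal_catalan_mul_centralBinom (n : ℕ) :
    ∑ ij ∈ antidiagonal n, catalan ij.1 * centralBinom ij.2 = (2 * n + 1).choose n := by
  have := two_mul_sum_antidiagonal_catalan_mul_centralBinom n
  have := two_mul_choose_two_mul_add_one n
  omega

/-- The binomial coefficient identity `C(2k-1, k) = Σ_{i=1}^{k} C_{i-1} · C(2k-2i, k-i)`,
where `C_m` denotes the `m`-th Catalan number. -/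
theorem choose_eq_sum_catalan_mul_choose (k : ℕ) (hk : 1 ≤ k) :
    Nat.choose (2 * k - 1) k =
      ∑ i ∈ Finset.Icc 1 k, catalan (i - 1) * Nat.choose (2 * k - 2 * i) (k - i) := by
  obtain ⟨n, rfl⟩ : ∃ n, k = n + 1 := ⟨k - 1, by omega⟩
  rw [show 2 * (n + 1) - 1 = 2 * n + 1 by omega, choose_symm_half,
    ← sum_antidiagonal_catalan_mul_centralBinom,
    sum_antidiagonal_eq_sum_range_succ (fun i j => catalan i * centralBinom j),
    range_eq_Ico, ← Ico_add_one_right_eq_Icc, ← sum_Ico_add' _ 0 (n + 1) 1]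
  refine sum_congr rfl fun j hj => ?_
  have hjn : j ≤ n := Nat.lt_succ_iff.mp (mem_Ico.mp hj).2
  rw [centralBinom_eq_two_mul_choose, add_tsub_cancel_right,
    show 2 * (n + 1) - 2 * (j + 1) = 2 * (n - j) by omega, Nat.add_sub_add_right]
end

section
/- For every n ≥ 1, the central binomial coefficients satisfy the recursion C(n, ⌊n/2⌋) = C(n−1, ⌊(n−1)/2⌋) + Σ_{i=1}^{⌊n/2⌋} C_{i−1} · C(n−2i, ⌊(n−2i)/2⌋), where C_m = (1/(m+1))·binom(2m, m) denotes the m-th Catalan number. -/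
/-!
Write `n = 2m + r` with `r ≤ 1` and let `B_m = C(2m, m)`. Then `C(2m, m) = B_m` and
`2 C(2m+1, m) = B_(m+1)`, and after the shift `i = a + 1` the sum becomes a convolution over
`a + b = m - 1`. Both parities thus reduce to the convolution identity
`2 Σ_{a+b=m} C_a B_b = B_(m+1)`, which follows by induction from the Catalan recursion
`C_(m+1) = Σ_{a+b=m} C_a C_b` and `B_(m+1) + 2 C_m = 4 B_m`.
-/

open Finset

theorem Finset.sum_Icc_one_eq_sum_antidiagonal {M : Type*} [AddCommMonoid M] (f : ℕ → ℕ → M)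
    (n : ℕ) : ∑ i ∈ Icc 1 (n + 1), f (i - 1) (n + 1 - i) = ∑ p ∈ antidiagonal n, f p.1 p.2 := by
  rw [Nat.sum_antidiagonal_eq_sum_range_succ, ← Ico_add_one_right_eq_Icc, sum_Ico_eq_sum_range,
    add_tsub_cancel_right]
  refine sum_congr rfl fun k _ => ?_
  congr 1 <;> omega

namespace Nat

theorem centralBinom_succ_add_two_mul_catalan_s8 (n : ℕ) :
    centralBinom (n + 1) + 2 * catalan n = 4 * centralBinom n := by
  have hcb := succ_mul_centralBinom_succ n
  have hcat := succ_mul_catalan_eq_centralBinom n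
  refine Nat.eq_of_mul_eq_mul_left n.add_one_pos ?_
  linear_combination hcb + 2 * hcat

theorem two_mul_sum_antidiagonal_catalan_mul_centralBinom_s8 (n : ℕ) :
    2 * ∑ p ∈ antidiagonal n, catalan p.1 * centralBinom p.2 = centralBinom (n + 1) := by
  induction n with
  | zero => simp [centralBinom, catalan_zero]
  | succ n ih =>
    have hstep : ∀ p ∈ antidiagonal n, catalan p.1 * centralBinom (p.2 + 1)
        + 2 * (catalan p.1 * catalan p.2) = 4 * (catalan p.1 * centralBinom p.2) :=
      fun p _ => by linear_combination catalan p.1 * centralBinom_succ_add_two_mul_catalan_s8 p.2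
    have hsum := sum_congr rfl hstep
    rw [sum_add_distrib, ← mul_sum, ← mul_sum, ← catalan_succ'] at hsum
    rw [Finset.Nat.sum_antidiagonal_succ']
    dsimp only
    rw [centralBinom_zero, mul_one]
    have := centralBinom_succ_add_two_mul_catalan_s8 (n + 1)
    omega

theorem two_mul_choose_two_mul_add_one_s8 (m : ℕ) :
    2 * (2 * m + 1).choose m = centralBinom (m + 1) := by
  have hsymm : (2 * m + 1).choose (m + 1) = (2 * m + 1).choose m :=
    choose_symm_of_eq_add (by omega)
  rw [centralBinom_eq_two_mul_choose, show 2 * (m + 1) = 2 * m + 1 + 1 by ring,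
    choose_succ_succ', hsymm, two_mul]

theorem sum_Icc_catalan_mul_choose_half (j : ℕ) {r : ℕ} (hr : r ≤ 1) :
    ∑ i ∈ Icc 1 (j + 1),
        catalan (i - 1) * (2 * (j + 1) + r - 2 * i).choose ((2 * (j + 1) + r - 2 * i) / 2) =
      ∑ p ∈ antidiagonal j, catalan p.1 * (2 * p.2 + r).choose p.2 := by
  rw [← sum_Icc_one_eq_sum_antidiagonal (fun a b => catalan a * (2 * b + r).choose b)]
  refine sum_congr rfl fun i hi => ?_
  rw [show 2 * (j + 1) + r - 2 * i = 2 * (j + 1 - i) + r by grind,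
    show (2 * (j + 1 - i) + r) / 2 = j + 1 - i by omega]

theorem four_mul_sum_antidiagonal_catalan_mul_choose_add_two_mul_catalan (j : ℕ) :
    4 * ∑ p ∈ antidiagonal j, catalan p.1 * (2 * p.2 + 1).choose p.2 + 2 * catalan (j + 1) =
      centralBinom (j + 1 + 1) := by
  have hodd : 2 * ∑ p ∈ antidiagonal j, catalan p.1 * (2 * p.2 + 1).choose p.2 =
      ∑ p ∈ antidiagonal j, catalan p.1 * centralBinom (p.2 + 1) := by
    rw [mul_sum]
    exact sum_congr rfl fun p _ => by rw [mul_left_comm, two_mul_choose_two_mul_add_one_s8]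
  have hconv := two_mul_sum_antidiagonal_catalan_mul_centralBinom_s8 (j + 1)
  rw [Finset.Nat.sum_antidiagonal_succ'] at hconv
  dsimp only at hconv
  rw [centralBinom_zero, mul_one] at hconv
  omega

end Nat

open Nat

theorem central_binomial_recursion_general (n : ℕ) :
    Nat.choose n (n / 2) =
      Nat.choose (n - 1) ((n - 1) / 2) +
        ∑ i ∈ Finset.Icc 1 (n / 2),
          catalan (i - 1) * Nat.choose (n - 2 * i) ((n - 2 * i) / 2) := by
  obtain ⟨m, r, hr, rfl⟩ : ∃ m r, r ≤ 1 ∧ n = 2 * m + r := ⟨n / 2, n % 2, by omega, by omega⟩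
  obtain _ | j := m
  · obtain rfl | rfl : r = 0 ∨ r = 1 := by omega
    all_goals simp
  rw [show (2 * (j + 1) + r) / 2 = j + 1 by omega, sum_Icc_catalan_mul_choose_half j hr]
  obtain rfl | rfl : r = 0 ∨ r = 1 := by omega
  · have hodd := two_mul_choose_two_mul_add_one_s8 j
    have hconv := two_mul_sum_antidiagonal_catalan_mul_centralBinom_s8 j
    simp only [add_zero, ← centralBinom_eq_two_mul_choose]
    rw [show 2 * (j + 1) - 1 = 2 * j + 1 by omega, show (2 * j + 1) / 2 = j by omega]
    omega
  · have hodd := two_mul_choose_two_mul_add_one_s8 (j + 1)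
    have hsum := four_mul_sum_antidiagonal_catalan_mul_choose_add_two_mul_catalan j
    have hstep := centralBinom_succ_add_two_mul_catalan_s8 (j + 1)
    rw [add_tsub_cancel_right, Nat.mul_div_cancel_left _ two_pos, ← centralBinom_eq_two_mul_choose]
    omega

/-- The recursion for central binomial coefficients:
`C(n, ⌊n/2⌋) = C(n-1, ⌊(n-1)/2⌋) + Σ_{i=1}^{⌊n/2⌋} C_{i-1} · C(n-2i, ⌊(n-2i)/2⌋)`,
where `C_m` denotes the `m`-th Catalan number. -/
theorem central_binomial_recursion (n : ℕ) (hn : 1 ≤ n) :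
    Nat.choose n (n / 2) =
      Nat.choose (n - 1) ((n - 1) / 2) +
        ∑ i ∈ Finset.Icc 1 (n / 2),
          catalan (i - 1) * Nat.choose (n - 2 * i) ((n - 2 * i) / 2) :=
  central_binomial_recursion_general n
end

section
/- For every n ≥ 1 and every a with 0 ≤ 2a ≤ n, the number of 321-avoiding involutions in S_n whose cycle decomposition contains exactly a transpositions (i.e., exactly 2a non-fixed points) equals n!·(n−2a+1)! / (a!·(n−2a)!·(n−a+1)!), equivalently C(n, a) − C(n, a−1). -/
/-- `mia n a` is the number of 321-avoiding involutions in `S_n` whose cycle decomposition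
contains exactly `a` transpositions, i.e. with exactly `2a` non-fixed points. -/
noncomputable def mia (n a : ℕ) : ℕ :=
  Set.ncard {w : Equiv.Perm ℕ |
    IsInvolutionOn n w ∧ Avoids321 n w ∧ Set.ncard {k : ℕ | w k ≠ k} = 2 * a}

/-!
A 321-avoiding involution of `[1, n]` is the same as an arc diagram on `[1, n]` in which no arc is
nested in another and no fixed point lies under an arc. Such a diagram is determined by the set
`Q` of right ends of its arcs: reading from the right, a point is a left end exactly when more
right ends than left ends lie beyond it, and the `i`-th left end is joined to the `i`-th right
end. The sets `Q` that occur are exactly the ballot sets, in which every prefix `[1, m]` contains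
at most `m / 2` elements of `Q`. Ballot sets of size `a` in `[1, n]` satisfy Pascal's recursion
(split on whether `n ∈ Q`), which gives `C(n, a) - C(n, a - 1)`; the factorial form is a
rearrangement.
-/

open Finset

lemma exists_orderEmbOfFin_eq {α : Type*} [LinearOrder α] {A : Finset α} {k : ℕ} (h : #A = k)
    {x : α} (hx : x ∈ A) : ∃ i, A.orderEmbOfFin h i = x := by
  rwa [← Set.mem_range, range_orderEmbOfFin]

def countLE (A : Finset ℕ) (m : ℕ) : ℕ := #{x ∈ A | x ≤ m}

section countLE

variable {A B : Finset ℕ} {m : ℕ}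

lemma countLE_eq_card (h : ∀ x ∈ A, x ≤ m) : countLE A m = #A := by
  rw [countLE, filter_true_of_mem h]

lemma countLE_add_card_filter_lt (A : Finset ℕ) (m : ℕ) :
    countLE A m + #{x ∈ A | m < x} = #A := by
  simpa only [countLE, not_le] using card_filter_add_card_filter_not (s := A) (· ≤ m)

lemma countLE_insert {x : ℕ} (hx : x ∉ A) (m : ℕ) :
    countLE (insert x A) m = countLE A m + if x ≤ m then 1 else 0 := by
  unfold countLE
  rw [filter_insert]
  split_ifs
  · exact card_insert_of_notMem fun h => hx (mem_of_mem_filter _ h)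
  · rfl

lemma countLE_add_one (A : Finset ℕ) (k : ℕ) :
    countLE A (k + 1) = countLE A k + if k + 1 ∈ A then 1 else 0 := by
  have : {x ∈ A | x ≤ k + 1} = {x ∈ A | x ≤ k} ∪ {x ∈ A | x = k + 1} := by
    rw [← filter_or]; exact filter_congr fun x _ => by omega
  rw [countLE, this, card_union_of_disjoint (disjoint_filter.2 fun x _ h => by omega),
    filter_eq']
  split_ifs <;> simp [countLE]

lemma countLE_union (h : Disjoint A B) (m : ℕ) :
    countLE (A ∪ B) m = countLE A m + countLE B m := by
  rw [countLE, filter_union, card_union_of_disjoint (disjoint_filter_filter h)]; rfl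

lemma countLE_le_self (h : 0 ∉ A) (m : ℕ) : countLE A m ≤ m := by
  calc countLE A m ≤ #(Icc 1 m) := card_le_card fun x hx => by
          rw [mem_filter] at hx
          have : x ≠ 0 := fun h0 => h (h0 ▸ hx.1)
          rw [mem_Icc]; omega
    _ = m := by simp

variable {k : ℕ}

lemma countLE_le_iff_lt_orderEmbOfFin (A : Finset ℕ) (h : #A = k) (i : Fin k) (x : ℕ) :
    countLE A x ≤ i ↔ x < A.orderEmbOfFin h i := by
  constructor
  · intro hx
    by_contra! hle
    have : #(Iic i) ≤ countLE A x := by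
      refine card_le_card_of_injOn (A.orderEmbOfFin h) (fun j hj => ?_)
        (A.orderEmbOfFin h).injective.injOn
      simp only [coe_Iic, Set.mem_Iic, coe_filter, Set.mem_ofPred_eq] at hj ⊢
      exact ⟨orderEmbOfFin_mem A h j, ((A.orderEmbOfFin h).monotone hj).trans hle⟩
    rw [Fin.card_Iic] at this
    omega
  · intro hx
    calc countLE A x ≤ #((Iio i).map (A.orderEmbOfFin h).toEmbedding) :=
          card_le_card fun y hy => by
            rw [mem_filter, ← mem_coe, ← range_orderEmbOfFin A h] at hy
            obtain ⟨⟨j, rfl⟩, hj⟩ := hy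
            exact mem_map_of_mem _ (mem_Iio.2 ((A.orderEmbOfFin h).lt_iff_lt.1 (hj.trans_lt hx)))
      _ = i := by simp

end countLE

/-- In the arc diagram of `w` (an arc `k ⌒ w k` for each `k < w k`) no arc is nested in
another and no fixed point lies under an arc. -/
structure IsNonnesting (w : Equiv.Perm ℕ) : Prop where
  apply_lt_apply : ∀ {k l}, k < l → k < w k → l < w l → w k < w l
  apply_ne_of_lt_of_lt : ∀ {k f}, k < f → f < w k → w f ≠ f

section Involution

variable {n : ℕ} {w : Equiv.Perm ℕ}

lemma IsInvolutionOn.apply_apply (h : IsInvolutionOn n w) (k : ℕ) : w (w k) = k :=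
  Equiv.ext_iff.1 h.2 k

lemma IsInvolutionOn.apply_le (h : IsInvolutionOn n w) {k : ℕ} (hk : w k ≠ k) : w k ≤ n :=
  (h.1 (w k) fun hw => hk (by rw [← hw, h.apply_apply])).2

lemma IsInvolutionOn.isNonnesting (h : IsInvolutionOn n w) (hw : Avoids321 n w) :
    IsNonnesting w where
  apply_lt_apply {k l} hkl hk hl := by
    by_contra! hle
    have hne : w l ≠ w k := fun he => by simp [w.injective he] at hkl
    exact hw k l (w l) (h.1 k hk.ne').1 hkl hl (h.apply_le hl.ne')
      ⟨by omega, by rw [h.apply_apply]; omega⟩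
  apply_ne_of_lt_of_lt {k f} hkf hfk hf :=
    hw k f (w k) (h.1 k (by omega)).1 hkf hfk (h.apply_le (by omega))
      ⟨by omega, by rw [h.apply_apply]; omega⟩

lemma IsInvolutionOn.apply_lt_apply_of_apply_lt (h : IsInvolutionOn n w) (hw : IsNonnesting w)
    {k l : ℕ} (hkl : k < l) (hk : w k < k) (hl : w l < l) : w k < w l := by
  by_contra! hle
  have hne : w l ≠ w k := fun he => by simp [w.injective he] at hkl
  have := hw.apply_lt_apply (lt_of_le_of_ne hle hne) (by rwa [h.apply_apply])
    (by rwa [h.apply_apply])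
  rw [h.apply_apply, h.apply_apply] at this
  omega

lemma IsInvolutionOn.avoids321 (h : IsInvolutionOn n w) (hw : IsNonnesting w) :
    Avoids321 n w := by
  rintro p q r - hpq hqr - ⟨hqp, hrq⟩
  rcases lt_trichotomy q (w q) with hq | hq | hq
  · rcases lt_trichotomy p (w p) with hp | hp | hp
    · have := hw.apply_lt_apply hpq hp hq; omega
    all_goals omega
  · rcases lt_trichotomy r (w r) with hr | hr | hr
    · omega
    · omega
    · exact hw.apply_ne_of_lt_of_lt (k := w r) (by omega) (by rw [h.apply_apply]; omega) hq.symm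
  · rcases lt_trichotomy p (w p) with hp | hp | hp
    · rcases lt_trichotomy r (w r) with hr | hr | hr
      · omega
      · omega
      · have := h.apply_lt_apply_of_apply_lt hw hqr hq hr; omega
    · exact hw.apply_ne_of_lt_of_lt (k := w q) (by omega) (by rw [h.apply_apply]; omega) hp.symm
    · have := h.apply_lt_apply_of_apply_lt hw hpq hp hq; omega

theorem IsInvolutionOn.avoids321_iff (h : IsInvolutionOn n w) :
    Avoids321 n w ↔ IsNonnesting w :=
  ⟨h.isNonnesting, h.avoids321⟩

end Involution

def openers (n : ℕ) (w : Equiv.Perm ℕ) : Finset ℕ := {k ∈ Icc 1 n | k < w k}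

def closers (n : ℕ) (w : Equiv.Perm ℕ) : Finset ℕ := {k ∈ Icc 1 n | w k < k}

/-- `P` and `Q` are the left and right ends of the arcs of a nonnesting involution of `[1, n]`;
the points outside `P ∪ Q` are its fixed points. -/
structure IsArcEnds (n : ℕ) (P Q : Finset ℕ) : Prop where
  left_subset : P ⊆ Icc 1 n
  right_subset : Q ⊆ Icc 1 n
  disjoint : Disjoint P Q
  countLE_le : ∀ m, countLE Q m ≤ countLE P m
  countLE_eq : ∀ k, k ∉ P → k ∉ Q → countLE P k = countLE Q k

lemma disjoint_openers_closers (n : ℕ) (w : Equiv.Perm ℕ) :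
    Disjoint (openers n w) (closers n w) :=
  disjoint_filter.2 fun k _ hk => by omega

section Involution

variable {n : ℕ} {w : Equiv.Perm ℕ}

lemma IsInvolutionOn.mem_openers (h : IsInvolutionOn n w) {k : ℕ} :
    k ∈ openers n w ↔ k < w k := by
  simp only [openers, mem_filter, mem_Icc, and_iff_right_iff_imp]
  exact fun hk => h.1 k hk.ne'

lemma IsInvolutionOn.mem_closers (h : IsInvolutionOn n w) {k : ℕ} :
    k ∈ closers n w ↔ w k < k := by
  simp only [closers, mem_filter, mem_Icc, and_iff_right_iff_imp]
  exact fun hk => h.1 k hk.ne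

lemma IsInvolutionOn.card_openers (h : IsInvolutionOn n w) : #(openers n w) = #(closers n w) :=
  card_nbij' w w (fun k hk => by simp_all [h.mem_openers, h.mem_closers, h.apply_apply])
    (fun k hk => by simp_all [h.mem_openers, h.mem_closers, h.apply_apply])
    (fun k _ => h.apply_apply k) (fun k _ => h.apply_apply k)

lemma IsInvolutionOn.ncard_support (h : IsInvolutionOn n w) :
    {k | w k ≠ k}.ncard = 2 * #(closers n w) := by
  have hsupp : {k | w k ≠ k} = ↑(openers n w ∪ closers n w) := by
    ext k
    simp only [Set.mem_ofPred_eq, coe_union, Set.mem_union, mem_coe, h.mem_openers,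
      h.mem_closers]
    omega
  rw [hsupp, Set.ncard_coe_finset, card_union_of_disjoint (disjoint_openers_closers n w),
    h.card_openers, two_mul]

lemma IsInvolutionOn.isArcEnds (h : IsInvolutionOn n w) (hw : IsNonnesting w) :
    IsArcEnds n (openers n w) (closers n w) where
  left_subset := filter_subset _ _
  right_subset := filter_subset _ _
  disjoint := disjoint_openers_closers n w
  countLE_le m := card_le_card_of_injOn w (fun q hq => by
      simp only [coe_filter, Set.mem_ofPred_eq, h.mem_closers, h.mem_openers] at hq ⊢
      rw [h.apply_apply]; omega) w.injective.injOn
  countLE_eq k hkP hkQ := by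
    rw [h.mem_openers] at hkP
    rw [h.mem_closers] at hkQ
    have hfix : w k = k := by omega
    refine le_antisymm (card_le_card_of_injOn w (fun p hp => ?_) w.injective.injOn)
      (card_le_card_of_injOn w (fun q hq => ?_) w.injective.injOn)
    · simp only [coe_filter, Set.mem_ofPred_eq, h.mem_closers, h.mem_openers] at hp ⊢
      refine ⟨by rw [h.apply_apply]; omega, not_lt.1 fun hkp => ?_⟩
      exact hw.apply_ne_of_lt_of_lt (lt_of_le_of_ne hp.2 fun he => by subst he; omega) hkp
        hfix
    · simp only [coe_filter, Set.mem_ofPred_eq, h.mem_closers, h.mem_openers] at hq ⊢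
      rw [h.apply_apply]; omega

end Involution

def IsBallot (Q : Finset ℕ) : Prop := ∀ m, 2 * countLE Q m ≤ m

namespace IsArcEnds

variable {n : ℕ} {P Q : Finset ℕ}

lemma card_eq (hPQ : IsArcEnds n P Q) : #P = #Q := by
  have hP : ∀ x ∈ P, x ≤ n := fun x hx => (mem_Icc.1 (hPQ.left_subset hx)).2
  have hQ : ∀ x ∈ Q, x ≤ n := fun x hx => (mem_Icc.1 (hPQ.right_subset hx)).2
  have h := hPQ.countLE_eq (n + 1) (fun hx => by have := hP _ hx; omega)
    (fun hx => by have := hQ _ hx; omega)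
  rwa [countLE_eq_card fun x hx => (hP x hx).trans n.le_succ,
    countLE_eq_card fun x hx => (hQ x hx).trans n.le_succ] at h

lemma mono (hPQ : IsArcEnds n P Q) {N : ℕ} (hN : n ≤ N) : IsArcEnds N P Q :=
  { hPQ with
    left_subset := hPQ.left_subset.trans (Icc_subset_Icc_right hN)
    right_subset := hPQ.right_subset.trans (Icc_subset_Icc_right hN) }

lemma isBallot (hPQ : IsArcEnds n P Q) : IsBallot Q := fun m => by
  have h0 : 0 ∉ P ∪ Q := fun h => by
    have := mem_Icc.1 (union_subset hPQ.left_subset hPQ.right_subset h); omega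
  have := countLE_le_self h0 m
  rw [countLE_union hPQ.disjoint] at this
  have := hPQ.countLE_le m
  omega

lemma mem_left_iff (hPQ : IsArcEnds n P Q) {k : ℕ} :
    k ∈ P ↔ k ∉ Q ∧ #{x ∈ P | k < x} < #{x ∈ Q | k < x} := by
  have hP := countLE_add_card_filter_lt P k
  have hQ := countLE_add_card_filter_lt Q k
  have hcard := hPQ.card_eq
  constructor
  · intro hk
    have hk1 : 1 ≤ k := (mem_Icc.1 (hPQ.left_subset hk)).1
    have hkQ : k ∉ Q := disjoint_left.1 hPQ.disjoint hk
    obtain ⟨j, rfl⟩ : ∃ j, k = j + 1 := ⟨k - 1, by omega⟩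
    have := hPQ.countLE_le j
    rw [countLE_add_one, if_pos hk] at hP
    rw [countLE_add_one, if_neg hkQ] at hQ
    exact ⟨hkQ, by omega⟩
  · rintro ⟨hkQ, hlt⟩
    by_contra hkP
    have := hPQ.countLE_eq k hkP hkQ
    omega

lemma left_unique {P' : Finset ℕ} (hPQ : IsArcEnds n P Q) (hP'Q : IsArcEnds n P' Q) :
    P = P' := by
  by_contra hne
  have hD : (symmDiff P P').Nonempty := nonempty_of_ne_empty (by simpa using hne)
  set k := (symmDiff P P').max' hD
  have habove : {x ∈ P | k < x} = {x ∈ P' | k < x} := by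
    ext x
    simp only [mem_filter, and_congr_left_iff]
    intro hx
    by_contra hx'
    have := le_max' (symmDiff P P') x (by rw [mem_symmDiff]; tauto)
    omega
  have hk := max'_mem _ hD
  rw [mem_symmDiff, hPQ.mem_left_iff, hP'Q.mem_left_iff, habove] at hk
  tauto

end IsArcEnds

section Ballot

variable {n : ℕ} {Q : Finset ℕ}

lemma IsBallot.two_mul_card_le (hQ : IsBallot Q) (hQn : Q ⊆ Icc 1 n) : 2 * #Q ≤ n := by
  simpa [countLE_eq_card fun x hx => (mem_Icc.1 (hQn hx)).2] using hQ n

lemma isBallot_insert_iff (hQn : Q ⊆ Icc 1 n) :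
    IsBallot (insert (n + 1) Q) ↔ IsBallot Q ∧ 2 * (#Q + 1) ≤ n + 1 := by
  have hn : n + 1 ∉ Q := fun h => by have := mem_Icc.1 (hQn h); omega
  have hcount := countLE_insert hn
  refine ⟨fun h => ⟨fun m => ?_, ?_⟩, fun ⟨h, hcard⟩ m => ?_⟩
  · have := h m; have := hcount m; omega
  · simpa [hcount, countLE_eq_card fun x hx => (mem_Icc.1 (hQn hx)).2.trans n.le_succ]
      using h (n + 1)
  · rw [hcount]
    split_ifs with hm
    · rw [countLE_eq_card fun x hx => (mem_Icc.1 (hQn hx)).2.trans (by omega)]; omega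
    · simpa using h m

end Ballot

lemma IsArcEnds.exists_insert_add_one {n : ℕ} {P Q : Finset ℕ} (hPQ : IsArcEnds n P Q)
    (hcard : 2 * (#Q + 1) ≤ n + 1) : ∃ P', IsArcEnds (n + 1) P' (insert (n + 1) Q) := by
  set F := Icc 1 n \ (P ∪ Q)
  have hsub : P ∪ Q ⊆ Icc 1 n := union_subset hPQ.left_subset hPQ.right_subset
  have hF : F.Nonempty := by
    rw [← card_pos, card_sdiff_of_subset hsub, card_union_of_disjoint hPQ.disjoint,
      hPQ.card_eq, Nat.card_Icc]
    omega
  -- the new arc joins `n + 1` to the largest fixed point of the diagram on `[1, n]`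
  set x := F.max' hF
  have hx : x ∈ F := max'_mem F hF
  simp only [F, mem_sdiff, mem_union, mem_Icc, not_or] at hx
  have hIcc : Icc 1 n ⊆ Icc 1 (n + 1) := Icc_subset_Icc_right n.le_succ
  have hnP : n + 1 ∉ P := fun h => by have := mem_Icc.1 (hPQ.left_subset h); omega
  have hnQ : n + 1 ∉ Q := fun h => by have := mem_Icc.1 (hPQ.right_subset h); omega
  have hcountP := countLE_insert hx.2.1
  have hcountQ := countLE_insert hnQ
  refine ⟨insert x P, ⟨?_, ?_, ?_, fun m => ?_, fun k hkP hkQ => ?_⟩⟩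
  · exact insert_subset (hIcc (mem_Icc.2 hx.1)) (hPQ.left_subset.trans hIcc)
  · exact insert_subset (mem_Icc.2 (by omega)) (hPQ.right_subset.trans hIcc)
  · rw [disjoint_insert_left, disjoint_insert_right, mem_insert]
    exact ⟨not_or.2 ⟨by omega, hx.2.2⟩, hnP, hPQ.disjoint⟩
  · have := hPQ.countLE_le m
    rw [hcountP, hcountQ]
    split_ifs <;> omega
  · rw [mem_insert, not_or] at hkP hkQ
    have hk : k < x ∨ n + 1 < k := by
      by_contra! hk
      have := le_max' F k (by
        simp only [F, mem_sdiff, mem_union, mem_Icc, not_or]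
        exact ⟨⟨by omega, by omega⟩, hkP.2, hkQ.2⟩)
      omega
    rcases hk with hk | hk
    · rw [hcountP, hcountQ, if_neg (by omega), if_neg (by omega), add_zero, add_zero]
      exact hPQ.countLE_eq k hkP.2 hkQ.2
    · have hle : ∀ y ∈ P ∪ Q, y ≤ k := fun y hy => (mem_Icc.1 (hsub hy)).2.trans (by omega)
      rw [hcountP, hcountQ, if_pos (by omega), if_pos (by omega),
        countLE_eq_card fun y hy => hle y (mem_union_left Q hy),
        countLE_eq_card fun y hy => hle y (mem_union_right P hy), hPQ.card_eq]

theorem IsBallot.exists_isArcEnds {n : ℕ} {Q : Finset ℕ} (hQ : IsBallot Q)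
    (hQn : Q ⊆ Icc 1 n) : ∃ P, IsArcEnds n P Q := by
  induction n generalizing Q with
  | zero =>
    obtain rfl : Q = ∅ := by simpa using hQn
    exact ⟨∅, by simp, by simp, by simp, fun m => le_rfl, fun _ _ _ => rfl⟩
  | succ n ih =>
    rw [← insert_Icc_right_eq_Icc_add_one (by omega)] at hQn
    by_cases hn : n + 1 ∈ Q
    · have hQ' := subset_insert_iff.1 hQn
      rw [← insert_erase hn, isBallot_insert_iff hQ'] at hQ
      obtain ⟨P, hP⟩ := ih hQ.1 hQ'
      rw [← insert_erase hn]
      exact hP.exists_insert_add_one hQ.2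
    · obtain ⟨P, hP⟩ := ih hQ ((subset_insert_iff_of_notMem hn).1 hQn)
      exact ⟨P, hP.mono n.le_succ⟩

section ArcMatch

variable {P Q : Finset ℕ}

noncomputable def arcMatchFun (P Q : Finset ℕ) (h : #Q = #P) (k : ℕ) : ℕ :=
  if hP : k ∈ P then Q.orderEmbOfFin h ((P.orderIsoOfFin rfl).symm ⟨k, hP⟩)
  else if hQ : k ∈ Q then P.orderEmbOfFin rfl ((Q.orderIsoOfFin h).symm ⟨k, hQ⟩)
  else k

variable (h : #Q = #P)

lemma arcMatchFun_left (i : Fin #P) :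
    arcMatchFun P Q h (P.orderEmbOfFin rfl i) = Q.orderEmbOfFin h i := by
  rw [arcMatchFun, dif_pos (orderEmbOfFin_mem P rfl i)]
  congr 1
  rw [OrderIso.symm_apply_eq]
  exact Subtype.ext (coe_orderIsoOfFin_apply P rfl i).symm

lemma arcMatchFun_right (hd : Disjoint P Q) (i : Fin #P) :
    arcMatchFun P Q h (Q.orderEmbOfFin h i) = P.orderEmbOfFin rfl i := by
  have hQ := orderEmbOfFin_mem Q h i
  rw [arcMatchFun, dif_neg (disjoint_right.1 hd hQ), dif_pos hQ]
  congr 1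
  rw [OrderIso.symm_apply_eq]
  exact Subtype.ext (coe_orderIsoOfFin_apply Q h i).symm

lemma arcMatchFun_of_notMem {k : ℕ} (hP : k ∉ P) (hQ : k ∉ Q) : arcMatchFun P Q h k = k := by
  rw [arcMatchFun, dif_neg hP, dif_neg hQ]

lemma arcMatchFun_involutive (hd : Disjoint P Q) : Function.Involutive (arcMatchFun P Q h) := by
  intro k
  by_cases hP : k ∈ P
  · obtain ⟨i, rfl⟩ := exists_orderEmbOfFin_eq rfl hP
    rw [arcMatchFun_left, arcMatchFun_right h hd]
  by_cases hQ : k ∈ Q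
  · obtain ⟨i, rfl⟩ := exists_orderEmbOfFin_eq h hQ
    rw [arcMatchFun_right h hd, arcMatchFun_left]
  · rw [arcMatchFun_of_notMem h hP hQ, arcMatchFun_of_notMem h hP hQ]

noncomputable def arcMatch (hd : Disjoint P Q) : Equiv.Perm ℕ :=
  Function.Involutive.toPerm _ (arcMatchFun_involutive h hd)

lemma arcMatch_apply (hd : Disjoint P Q) (k : ℕ) : arcMatch h hd k = arcMatchFun P Q h k := rfl

end ArcMatch

lemma IsInvolutionOn.eq_arcMatch {n : ℕ} {w : Equiv.Perm ℕ} (h : IsInvolutionOn n w)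
    (hw : IsNonnesting w) :
    w = arcMatch h.card_openers.symm (disjoint_openers_closers n w) := by
  have hc := h.card_openers.symm
  have hleft : ∀ i, w ((openers n w).orderEmbOfFin rfl i) = (closers n w).orderEmbOfFin hc i :=
    congrFun <| orderEmbOfFin_unique hc
      (fun i => h.mem_closers.2 (by
        have := h.mem_openers.1 (orderEmbOfFin_mem _ rfl i); rwa [h.apply_apply]))
      fun i j hij => hw.apply_lt_apply ((orderEmbOfFin _ rfl).strictMono hij)
        (h.mem_openers.1 (orderEmbOfFin_mem _ rfl i))
        (h.mem_openers.1 (orderEmbOfFin_mem _ rfl j))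
  ext k
  rw [arcMatch_apply]
  by_cases hP : k ∈ openers n w
  · obtain ⟨i, rfl⟩ := exists_orderEmbOfFin_eq rfl hP
    rw [arcMatchFun_left, hleft]
  by_cases hQ : k ∈ closers n w
  · obtain ⟨i, rfl⟩ := exists_orderEmbOfFin_eq hc hQ
    rw [arcMatchFun_right hc (disjoint_openers_closers n w), ← hleft, h.apply_apply]
  · rw [arcMatchFun_of_notMem hc hP hQ]
    rw [h.mem_openers] at hP
    rw [h.mem_closers] at hQ
    omega

namespace IsArcEnds

variable {n : ℕ} {P Q : Finset ℕ} (hPQ : IsArcEnds n P Q)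

lemma orderEmbOfFin_lt (i : Fin #P) :
    P.orderEmbOfFin rfl i < Q.orderEmbOfFin hPQ.card_eq.symm i := by
  have hne : P.orderEmbOfFin rfl i ≠ Q.orderEmbOfFin hPQ.card_eq.symm i := fun he =>
    disjoint_left.1 hPQ.disjoint (orderEmbOfFin_mem P rfl i) (he ▸ orderEmbOfFin_mem Q _ i)
  refine lt_of_le_of_ne (not_lt.1 fun hlt => ?_) hne
  have hP := (countLE_le_iff_lt_orderEmbOfFin P rfl i _).2 hlt
  have hQ := (countLE_le_iff_lt_orderEmbOfFin Q hPQ.card_eq.symm i _).not.2 (lt_irrefl _)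
  have := hPQ.countLE_le (Q.orderEmbOfFin hPQ.card_eq.symm i)
  omega

lemma lt_arcMatch_iff {k : ℕ} : k < arcMatch hPQ.card_eq.symm hPQ.disjoint k ↔ k ∈ P := by
  rw [arcMatch_apply]
  refine ⟨fun hlt => ?_, fun hk => ?_⟩
  · by_contra hP
    by_cases hQ : k ∈ Q
    · obtain ⟨i, rfl⟩ := exists_orderEmbOfFin_eq hPQ.card_eq.symm hQ
      rw [arcMatchFun_right _ hPQ.disjoint] at hlt
      exact lt_asymm hlt (hPQ.orderEmbOfFin_lt i)
    · rw [arcMatchFun_of_notMem _ hP hQ] at hlt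
      exact lt_irrefl k hlt
  · obtain ⟨i, rfl⟩ := exists_orderEmbOfFin_eq rfl hk
    rw [arcMatchFun_left]
    exact hPQ.orderEmbOfFin_lt i

lemma arcMatch_lt_iff {k : ℕ} : arcMatch hPQ.card_eq.symm hPQ.disjoint k < k ↔ k ∈ Q := by
  rw [arcMatch_apply]
  refine ⟨fun hlt => ?_, fun hk => ?_⟩
  · by_contra hQ
    by_cases hP : k ∈ P
    · obtain ⟨i, rfl⟩ := exists_orderEmbOfFin_eq rfl hP
      rw [arcMatchFun_left] at hlt
      exact lt_asymm hlt (hPQ.orderEmbOfFin_lt i)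
    · rw [arcMatchFun_of_notMem _ hP hQ] at hlt
      exact lt_irrefl k hlt
  · obtain ⟨i, rfl⟩ := exists_orderEmbOfFin_eq hPQ.card_eq.symm hk
    rw [arcMatchFun_right _ hPQ.disjoint]
    exact hPQ.orderEmbOfFin_lt i

lemma isInvolutionOn_arcMatch : IsInvolutionOn n (arcMatch hPQ.card_eq.symm hPQ.disjoint) := by
  refine ⟨fun k hk => ?_, Equiv.ext (arcMatchFun_involutive _ hPQ.disjoint)⟩
  have hPQk : k ∈ P ∪ Q := by
    rw [mem_union, ← hPQ.lt_arcMatch_iff, ← hPQ.arcMatch_lt_iff]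
    omega
  exact mem_Icc.1 (union_subset hPQ.left_subset hPQ.right_subset hPQk)

lemma closers_arcMatch : closers n (arcMatch hPQ.card_eq.symm hPQ.disjoint) = Q := by
  ext k
  rw [hPQ.isInvolutionOn_arcMatch.mem_closers, hPQ.arcMatch_lt_iff]

lemma isNonnesting_arcMatch : IsNonnesting (arcMatch hPQ.card_eq.symm hPQ.disjoint) where
  apply_lt_apply {k l} hkl hk hl := by
    rw [hPQ.lt_arcMatch_iff] at hk hl
    obtain ⟨i, rfl⟩ := exists_orderEmbOfFin_eq rfl hk
    obtain ⟨j, rfl⟩ := exists_orderEmbOfFin_eq rfl hl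
    rw [arcMatch_apply, arcMatch_apply, arcMatchFun_left, arcMatchFun_left]
    exact (Q.orderEmbOfFin _).strictMono ((P.orderEmbOfFin rfl).lt_iff_lt.1 hkl)
  apply_ne_of_lt_of_lt {k f} hkf hfk hf := by
    have hk := hPQ.lt_arcMatch_iff.1 (hkf.trans hfk)
    have hfP : f ∉ P := fun h => (hPQ.lt_arcMatch_iff.2 h).ne' hf
    have hfQ : f ∉ Q := fun h => (hPQ.arcMatch_lt_iff.2 h).ne hf
    obtain ⟨i, rfl⟩ := exists_orderEmbOfFin_eq rfl hk
    rw [arcMatch_apply, arcMatchFun_left] at hfk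
    have hP := (countLE_le_iff_lt_orderEmbOfFin P rfl i f).not.2 (not_lt.2 hkf.le)
    have hQ := (countLE_le_iff_lt_orderEmbOfFin Q hPQ.card_eq.symm i f).2 hfk
    have := hPQ.countLE_eq f hfP hfQ
    omega

end IsArcEnds

lemma IsInvolutionOn.eq_of_closers_eq {n : ℕ} {w w' : Equiv.Perm ℕ} (h : IsInvolutionOn n w)
    (hw : IsNonnesting w) (h' : IsInvolutionOn n w') (hw' : IsNonnesting w')
    (hQ : closers n w = closers n w') : w = w' := by
  have hP : openers n w = openers n w' :=
    (h.isArcEnds hw).left_unique (hQ ▸ h'.isArcEnds hw')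
  rw [h.eq_arcMatch hw, h'.eq_arcMatch hw']
  congr 1

open Classical in
noncomputable def ballotSets (n a : ℕ) : Finset (Finset ℕ) :=
  {Q ∈ (Icc 1 n).powersetCard a | IsBallot Q}

lemma mem_ballotSets {n a : ℕ} {Q : Finset ℕ} :
    Q ∈ ballotSets n a ↔ (Q ⊆ Icc 1 n ∧ #Q = a) ∧ IsBallot Q := by
  simp only [ballotSets, mem_filter, mem_powersetCard]

theorem mia_eq_card_ballotSets (n a : ℕ) : mia n a = #(ballotSets n a) := by
  rw [mia, ← Set.ncard_coe_finset]
  refine Set.ncard_congr (fun w _ => closers n w) (fun w ⟨h, hw, ha⟩ => ?_)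
    (fun w w' ⟨h, hw, _⟩ ⟨h', hw', _⟩ hQ =>
      h.eq_of_closers_eq (h.avoids321_iff.1 hw) h' (h'.avoids321_iff.1 hw') hQ)
    (fun Q hQ => ?_)
  · rw [h.avoids321_iff] at hw
    rw [h.ncard_support] at ha
    exact mem_ballotSets.2 ⟨⟨filter_subset _ _, by omega⟩, (h.isArcEnds hw).isBallot⟩
  · obtain ⟨⟨hQn, hQa⟩, hQ⟩ := mem_ballotSets.1 hQ
    obtain ⟨P, hPQ⟩ := hQ.exists_isArcEnds hQn
    have h := hPQ.isInvolutionOn_arcMatch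
    refine ⟨_, ⟨h, h.avoids321_iff.2 hPQ.isNonnesting_arcMatch, ?_⟩, hPQ.closers_arcMatch⟩
    rw [h.ncard_support, hPQ.closers_arcMatch, hQa]

lemma ballotSets_zero (n : ℕ) : ballotSets n 0 = {∅} := by
  ext Q
  rw [mem_ballotSets, mem_singleton, card_eq_zero]
  constructor
  · exact fun h => h.1.2
  · rintro rfl
    exact ⟨⟨empty_subset _, rfl⟩, fun m => by simp [countLE]⟩

lemma ballotSets_eq_empty {n a : ℕ} (h : n < 2 * a) : ballotSets n a = ∅ :=
  eq_empty_of_forall_notMem fun Q hQ => by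
    obtain ⟨⟨hQn, rfl⟩, hB⟩ := mem_ballotSets.1 hQ
    have := hB.two_mul_card_le hQn
    omega

lemma card_ballotSets_add_one {n a : ℕ} (h : 2 * (a + 1) ≤ n + 1) :
    #(ballotSets (n + 1) (a + 1)) = #(ballotSets n (a + 1)) + #(ballotSets n a) := by
  classical
  have hn : n + 1 ∉ Icc 1 n := by simp
  have hnQ : ∀ Q ∈ (Icc 1 n).powersetCard a, n + 1 ∉ Q := fun Q hQ hmem =>
    hn ((mem_powersetCard.1 hQ).1 hmem)
  have hinsert : {Q ∈ (Icc 1 n).powersetCard a | IsBallot (insert (n + 1) Q)} =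
      {Q ∈ (Icc 1 n).powersetCard a | IsBallot Q} := by
    refine filter_congr fun Q hQ => ?_
    rw [mem_powersetCard] at hQ
    rw [isBallot_insert_iff hQ.1, hQ.2, and_iff_left h]
  rw [ballotSets, ← insert_Icc_right_eq_Icc_add_one (by omega), powersetCard_succ_insert hn,
    filter_union, filter_image, card_union_of_disjoint, card_image_of_injOn]
  · rw [hinsert]; rfl
  · intro Q hQ Q' hQ' he
    simp only [coe_filter, Set.mem_ofPred_eq] at hQ hQ'
    rw [← erase_insert (hnQ Q hQ.1), he, erase_insert (hnQ Q' hQ'.1)]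
  · refine disjoint_left.2 fun Q hQ hQ' => ?_
    obtain ⟨Q', -, rfl⟩ := mem_image.1 hQ'
    exact hn ((mem_powersetCard.1 (mem_filter.1 hQ).1).1 (mem_insert_self _ _))

theorem card_ballotSets {n a : ℕ} (h : 2 * a ≤ n + 1) :
    (#(ballotSets n a) : ℤ) = n.choose a - if a = 0 then 0 else (n.choose (a - 1) : ℤ) := by
  induction n generalizing a with
  | zero =>
    obtain rfl : a = 0 := by omega
    simp [ballotSets_zero]
  | succ n ih =>
    rcases a with _ | a
    · simp [ballotSets_zero]
    by_cases hA : 2 * (a + 1) ≤ n + 1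
    · rw [card_ballotSets_add_one hA, Nat.cast_add, ih hA, ih (by omega)]
      rcases a with _ | b
      · simp [Nat.choose_succ_succ]
      · simp [Nat.choose_succ_succ]
        ring
    · obtain rfl : n = 2 * a := by omega
      rw [ballotSets_eq_empty (by omega)]
      simp [Nat.choose_symm_half]

lemma choose_sub_choose_pred_eq_div {n a : ℕ} (ha : 2 * a ≤ n) :
    ((n.choose a : ℝ) - if a = 0 then 0 else (n.choose (a - 1) : ℝ)) =
      ((n.factorial * (n - 2 * a + 1).factorial : ℕ) : ℝ) /
        ((a.factorial * (n - 2 * a).factorial * (n - a + 1).factorial : ℕ) : ℝ) := by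
  obtain ⟨c, rfl⟩ : ∃ c, n = 2 * a + c := ⟨n - 2 * a, by omega⟩
  rcases a with _ | b
  · simp
    field_simp
  · have e1 : 2 * (b + 1) + c - 2 * (b + 1) = c := by omega
    have e2 : 2 * (b + 1) + c - (b + 1) + 1 = (b + c + 1) + 1 := by omega
    have e3 : 2 * (b + 1) + c - (b + 1) = b + c + 1 := by omega
    have e4 : 2 * (b + 1) + c - b = b + c + 1 + 1 := by omega
    rw [if_neg b.succ_ne_zero, add_tsub_cancel_right, Nat.cast_choose ℝ (by omega),
      Nat.cast_choose ℝ (by omega), e1, e2, e3, e4]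
    push_cast [Nat.factorial_succ]
    field_simp
    ring

theorem mia_eq_general (n a : ℕ) (ha : 2 * a ≤ n) :
    ((mia n a : ℝ) =
      ((n.factorial * (n - 2 * a + 1).factorial : ℕ) : ℝ) /
        ((a.factorial * (n - 2 * a).factorial * (n - a + 1).factorial : ℕ) : ℝ)) ∧
    (mia n a : ℤ) = (n.choose a : ℤ) - (if a = 0 then 0 else (n.choose (a - 1) : ℤ)) := by
  have hcount : (mia n a : ℤ) = n.choose a - if a = 0 then 0 else (n.choose (a - 1) : ℤ) := by
    rw [mia_eq_card_ballotSets]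
    exact card_ballotSets (by omega)
  refine ⟨?_, hcount⟩
  rw [← choose_sub_choose_pred_eq_div ha]
  exact_mod_cast hcount

/-- The number of 321-avoiding involutions in `S_n` with exactly `a` transpositions equals
`n!·(n-2a+1)! / (a!·(n-2a)!·(n-a+1)!)`, equivalently `C(n,a) - C(n,a-1)`
(with the convention `C(n,-1) = 0`). -/
theorem mia_eq (n a : ℕ) (hn : 1 ≤ n) (ha : 2 * a ≤ n) :
    ((mia n a : ℝ) =
      ((n.factorial * (n - 2 * a + 1).factorial : ℕ) : ℝ) /
        ((a.factorial * (n - 2 * a).factorial * (n - a + 1).factorial : ℕ) : ℝ)) ∧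
    (mia n a : ℤ) = (n.choose a : ℤ) - (if a = 0 then 0 else (n.choose (a - 1) : ℤ)) :=
  mia_eq_general n a ha
end
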